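/- arXiv:1506.06369 — 4 statements merged into one kernel-verified Lean document; each statement's English description precedes it below -/
import Mathlib

section
/- Let G be a bridgeless cubic graph on n vertices and F an even factor of G with isolated-vertex set V_F and set of circuits C_F. Then G has a travelling salesman tour of length at most n + 2·|C_F| + |V_F| − 2. -/
open SimpleGraph

variable {V : Type*}

noncomputable def deg (F : SimpleGraph V) (v : V) : ℕ := Nat.card (F.neighborSet v)

def IsCubic (G : SimpleGraph V) : Prop := ∀ v, deg G v = 3

def Bridgeless (G : SimpleGraph V) : Prop := ∀ e : Sym2 V, ¬ G.IsBridge e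

def IsEvenFactor (G F : SimpleGraph V) : Prop := F ≤ G ∧ ∀ v, deg F v = 0 ∨ deg F v = 2

def Is2Factor (G F : SimpleGraph V) : Prop := F ≤ G ∧ ∀ v, deg F v = 2

noncomputable def numIso (F : SimpleGraph V) : ℕ := Nat.card {v : V // deg F v = 0}

def IsCircuitOf (F : SimpleGraph V) (C : Set V) : Prop :=
  ∃ v, deg F v ≠ 0 ∧ C = {u | F.Reachable v u}

noncomputable def numCirc (F : SimpleGraph V) : ℕ := Nat.card {C : Set V // IsCircuitOf F C}

noncomputable def cost [Fintype V] (F : SimpleGraph V) : ℝ :=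
  (Fintype.card V : ℝ) + 2 * (numCirc F : ℝ) + (numIso F : ℝ)

open Walk

section Helpers
variable {G F : SimpleGraph V}

lemma deg_two_pair {F : SimpleGraph V} {v : V} (h : deg F v = 2) :
    ∃ a b, a ≠ b ∧ F.neighborSet v = {a, b} := by
  rw [deg, Nat.card_coe_set_eq, Set.ncard_eq_two] at h
  exact h

lemma not_adj_of_deg_zero [Fintype V] {F : SimpleGraph V} {v : V} (h : deg F v = 0) :
    ∀ u, ¬ F.Adj v u := by
  rw [deg, Nat.card_coe_set_eq, Set.ncard_eq_zero (Set.toFinite _)] at h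
  intro u hu
  exact absurd (h ▸ hu : u ∈ (∅ : Set V)) (Set.notMem_empty u)

lemma reach_of_deg_zero [Fintype V] {F : SimpleGraph V} {v u : V} (h : deg F v = 0)
    (hr : F.Reachable v u) : u = v := by
  obtain ⟨p⟩ := hr
  cases p with
  | nil => rfl
  | cons ha _ => exact absurd ha (not_adj_of_deg_zero h _)

lemma mem_dropUntil_or [DecidableEq V] {a b : V} (p : G.Walk a b) :
    ∀ {x y : V} (hx : x ∈ p.support) (hy : y ∈ p.support),
      y ∈ (p.dropUntil x hx).support ∨ x ∈ (p.dropUntil y hy).support := by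
  induction p with
  | nil =>
    intro x y hx hy
    simp only [support_nil, List.mem_singleton] at hx hy
    subst hx; subst hy
    exact Or.inl (start_mem_support _)
  | @cons a c b r q ih =>
    intro x y hx hy
    by_cases hax : a = x
    · subst hax
      left
      simp only [Walk.dropUntil, dif_pos rfl]
      exact hy
    · by_cases hay : a = y
      · subst hay
        right
        simp only [Walk.dropUntil, dif_pos rfl]
        exact hx
      · have hx' : x ∈ q.support := by
          cases hx with
          | head => exact absurd rfl hax
          | tail _ h => exact h
        have hy' : y ∈ q.support := by
          cases hy with
          | head => exact absurd rfl hay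
          | tail _ h => exact h
        have := ih hx' hy'
        simp only [Walk.dropUntil, dif_neg hax, dif_neg hay]
        exact this

/-- In any walk, a support vertex other than the end has a neighbor in the support. -/
lemma succ_in_walk {u t : V} (d : G.Walk u t) :
    ∀ {y : V}, y ∈ d.support → y ≠ t → ∃ z, G.Adj y z ∧ z ∈ d.support := by
  induction d with
  | nil =>
    intro y hy hyt
    simp only [support_nil, List.mem_singleton] at hy
    exact absurd hy hyt
  | @cons a c b r q ih =>
    intro y hy hyt
    rcases hy with _ | ⟨_, hy⟩
    · exact ⟨c, r, by simp [support_cons, start_mem_support]⟩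
    · obtain ⟨z, hz, hzs⟩ := ih hy hyt
      exact ⟨z, hz, by simp [support_cons, hzs]⟩

/-- In a path, an interior vertex has two distinct neighbors in the support. -/
lemma path_interior_neighbors {u t : V} (d : G.Walk u t) (hd : d.IsPath) :
    ∀ {y : V}, y ∈ d.support → y ≠ u → y ≠ t →
      ∃ z₁ z₂, z₁ ≠ z₂ ∧ z₁ ∈ d.support ∧ z₂ ∈ d.support ∧ G.Adj y z₁ ∧ G.Adj y z₂ := by
  induction d with
  | nil =>
    intro y hy hyu _
    simp only [support_nil, List.mem_singleton] at hy
    exact absurd hy hyu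
  | @cons a c b r q ih =>
    intro y hy hyu hyt
    have hy' : y ∈ q.support := by
      rcases hy with _ | ⟨_, hy⟩
      · exact absurd rfl hyu
      · exact hy
    by_cases hyc : y = c
    · subst hyc
      have hyt' : y ≠ b := hyt
      obtain ⟨z, hz, hzs⟩ := succ_in_walk q (start_mem_support q) hyt'
      refine ⟨a, z, ?_, by simp [support_cons], by simp [support_cons, hzs], r.symm, hz⟩
      rintro rfl
      exact (cons_isPath_iff r q).mp hd |>.2 hzs
    · obtain ⟨z₁, z₂, h12, h1, h2, a1, a2⟩ := ih ((cons_isPath_iff r q).mp hd).1 hy' hyc hyt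
      exact ⟨z₁, z₂, h12, by simp [support_cons, h1], by simp [support_cons, h2], a1, a2⟩

lemma pair_eq {y z₁ z₂ : V} (h : deg F y = 2) (h1 : F.Adj y z₁) (h2 : F.Adj y z₂)
    (h12 : z₁ ≠ z₂) : F.neighborSet y = {z₁, z₂} := by
  obtain ⟨a, b, hab, hset⟩ := deg_two_pair h
  have m1 : z₁ ∈ ({a, b} : Set V) := hset ▸ h1
  have m2 : z₂ ∈ ({a, b} : Set V) := hset ▸ h2
  rw [hset]
  rcases m1 with rfl | rfl <;> rcases m2 with rfl | rfl
  · exact absurd rfl h12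
  · rfl
  · exact Set.pair_comm _ _
  · exact absurd rfl h12

lemma walk_closed {S : Set V} (hS : ∀ y ∈ S, ∀ z, F.Adj y z → z ∈ S) :
    ∀ {x z : V}, F.Walk x z → x ∈ S → z ∈ S := by
  intro x z q
  induction q with
  | nil => exact id
  | cons h _ ih => exact fun hx => ih (hS _ hx _ h)

lemma mem_support_rotate [DecidableEq V] {x v : V} (c : G.Walk v v) (h : x ∈ c.support) {y : V} :
    y ∈ (c.rotate x h).support ↔ y ∈ c.support := by
  unfold Walk.rotate
  rw [mem_support_append_iff]
  conv_rhs => rw [← take_spec c h, mem_support_append_iff]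
  exact or_comm

lemma length_rotate [DecidableEq V] {x v : V} (c : G.Walk v v) (h : x ∈ c.support) :
    (c.rotate x h).length = c.length := by
  unfold Walk.rotate
  rw [length_append]
  conv_rhs => rw [← take_spec c h, length_append]
  exact Nat.add_comm _ _

lemma circuit_tour [Fintype V] [DecidableEq V] {v : V}
    (hdeg : ∀ u, F.Reachable v u → deg F u = 2) :
    ∃ w : F.Walk v v, (∀ u, F.Reachable v u → u ∈ w.support) ∧
      w.length ≤ Nat.card {u | F.Reachable v u} := by
  classical
  set n := Fintype.card V with hn
  let P : ℕ → Prop := fun k => ∃ t, ∃ p : F.Walk v t, p.IsPath ∧ p.length = k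
  have hP0 : P 0 := ⟨v, Walk.nil, IsPath.nil, rfl⟩
  have hPbd : ∀ {k}, P k → k ≤ n := by
    rintro k ⟨t, p, hp, rfl⟩
    exact le_of_lt hp.length_lt
  set L := Nat.findGreatest P n with hLdef
  have hL : P L := Nat.findGreatest_spec (Nat.zero_le n) hP0
  have hmax : ∀ {t : V} (p : F.Walk v t), p.IsPath → p.length ≤ L := fun p hp =>
    Nat.le_findGreatest (hPbd ⟨_, p, hp, rfl⟩) ⟨_, p, hp, rfl⟩
  obtain ⟨t, p, hp, hpl⟩ := hL
  have hvdeg : deg F v = 2 := hdeg v (Reachable.refl v)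
  obtain ⟨a₀, b₀, hab₀, hset₀⟩ := deg_two_pair hvdeg
  have hadj₀ : F.Adj v a₀ := by
    have : a₀ ∈ F.neighborSet v := by rw [hset₀]; exact Set.mem_insert _ _
    exact this
  have hL1 : 1 ≤ L := by
    have hpath : (Walk.cons hadj₀ Walk.nil : F.Walk v a₀).IsPath := by
      rw [cons_isPath_iff]
      exact ⟨IsPath.nil, by simp [hadj₀.ne]⟩
    simpa using hmax _ hpath
  have htv : t ≠ v := by
    rintro rfl
    have : p = Walk.nil := congrArg Subtype.val (Path.loop_eq ⟨p, hp⟩)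
    rw [this] at hpl
    simp at hpl
    omega
  have hreach_of_mem : ∀ {x : V}, x ∈ p.support → F.Reachable v x := fun hx => ⟨p.takeUntil _ hx⟩
  have hnbr_t : ∀ z, F.Adj t z → z ∈ p.support := by
    intro z hz
    by_contra hzs
    have hrev : (Walk.cons hz.symm p.reverse).IsPath := by
      rw [cons_isPath_iff]
      refine ⟨hp.reverse, ?_⟩
      rw [support_reverse, List.mem_reverse]
      exact hzs
    have := hmax (Walk.cons hz.symm p.reverse).reverse hrev.reverse
    rw [length_reverse] at this
    simp only [length_cons, length_reverse] at this
    omega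
  have htdeg : deg F t = 2 := hdeg t ⟨p⟩
  obtain ⟨n₁, n₂, hn12, hnset⟩ := deg_two_pair htdeg
  have ha1 : F.Adj t n₁ := by
    have : n₁ ∈ F.neighborSet t := by rw [hnset]; exact Set.mem_insert _ _
    exact this
  have ha2 : F.Adj t n₂ := by
    have : n₂ ∈ F.neighborSet t := by rw [hnset]; exact Set.mem_insert_of_mem _ rfl
    exact this
  obtain ⟨u, o, hu, huo, hadj_tu, hadj_to, hmem_o⟩ :
      ∃ (u o : V) (hu : u ∈ p.support), u ≠ o ∧ F.Adj t u ∧ F.Adj t o ∧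
        o ∈ (p.dropUntil u hu).support := by
    rcases mem_dropUntil_or p (hnbr_t _ ha1) (hnbr_t _ ha2) with h | h
    · exact ⟨n₁, n₂, _, hn12, ha1, ha2, h⟩
    · exact ⟨n₂, n₁, _, hn12.symm, ha2, ha1, h⟩
  have hnset' : F.neighborSet t = {u, o} := pair_eq htdeg hadj_tu hadj_to huo
  set d := p.dropUntil u hu with hd_def
  have hd : d.IsPath := hp.dropUntil hu
  have hut : u ≠ t := hadj_tu.ne.symm
  have hot : o ≠ t := hadj_to.ne.symm
  have ht_mem_d : t ∈ d.support := end_mem_support d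
  have hu_mem_d : u ∈ d.support := start_mem_support d
  have hdsub : d.support ⊆ p.support := support_dropUntil_subset p hu
  have hclosed : ∀ y ∈ {x | x ∈ d.support}, ∀ z, F.Adj y z → z ∈ {x | x ∈ d.support} := by
    intro y hy z hz
    simp only [Set.mem_setOf_eq] at hy ⊢
    by_cases hyt : y = t
    · subst hyt
      have : z ∈ F.neighborSet y := hz
      rw [hnset'] at this
      rcases this with rfl | rfl
      · exact hu_mem_d
      · exact hmem_o
    · by_cases hyu : y = u
      · subst hyu
        obtain ⟨c₂, h2, q, hdq⟩ := Walk.exists_eq_cons_of_ne hut d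
        have hqpath : q.IsPath := by
          have := hd
          rw [hdq, cons_isPath_iff] at this
          exact this.1
        have hc2 : c₂ ∈ d.support := by
          rw [hdq, support_cons]
          exact List.mem_cons_of_mem _ (start_mem_support q)
        have hc2t : c₂ ≠ t := by
          rintro rfl
          have hqnil : q = Walk.nil := congrArg Subtype.val (Path.loop_eq ⟨q, hqpath⟩)
          have : d.support = [y, c₂] := by rw [hdq, hqnil]; rfl
          rw [this] at hmem_o
          rcases hmem_o with _ | ⟨_, _ | ⟨_, h⟩⟩
          · exact huo rfl
          · exact hot rfl
          · exact (List.not_mem_nil h).elim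
        have hyset : F.neighborSet y = {t, c₂} :=
          pair_eq (hdeg y (hreach_of_mem hu)) hadj_tu.symm h2 (Ne.symm hc2t)
        have : z ∈ F.neighborSet y := hz
        rw [hyset] at this
        rcases this with rfl | rfl
        · exact ht_mem_d
        · exact hc2
      · obtain ⟨z₁, z₂, h12, hm1', hm2', a1, a2⟩ :=
          path_interior_neighbors d hd hy hyu hyt
        have hyset : F.neighborSet y = {z₁, z₂} :=
          pair_eq (hdeg y (hreach_of_mem (hdsub hy))) a1 a2 h12
        have : z ∈ F.neighborSet y := hz
        rw [hyset] at this
        rcases this with rfl | rfl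
        · exact hm1'
        · exact hm2'
  have hcover : ∀ z, F.Reachable v z → z ∈ d.support := by
    intro z hz
    obtain ⟨q⟩ := (Reachable.symm ⟨p⟩).trans hz
    exact walk_closed hclosed q ht_mem_d
  set c : F.Walk u u := d.concat hadj_tu with hc_def
  have hcsup : ∀ {y : V}, y ∈ c.support ↔ y ∈ d.support := by
    intro y
    rw [hc_def, support_concat, List.mem_append, List.mem_singleton]
    constructor
    · rintro (h | rfl)
      · exact h
      · exact hu_mem_d
    · exact Or.inl
  have hclen : c.length = d.support.length := by
    rw [hc_def, length_concat, length_support]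
  have hbound : c.length ≤ Nat.card {x | F.Reachable v x} := by
    rw [hclen, ← List.toFinset_card_of_nodup hd.support_nodup,
      Nat.card_coe_set_eq, ← Set.ncard_coe_finset]
    apply Set.ncard_le_ncard _ (Set.toFinite _)
    intro x hx
    simp only [Finset.coe_sort_coe, Finset.mem_coe, List.mem_toFinset] at hx
    exact hreach_of_mem (hdsub hx)
  have hvmem : v ∈ c.support := hcsup.mpr (hcover v (Reachable.refl v))
  refine ⟨c.rotate v hvmem, ?_, ?_⟩
  · intro z hz
    rw [mem_support_rotate]
    exact hcsup.mpr (hcover z hz)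
  · rw [_root_.length_rotate]
    exact hbound

lemma assemble [Fintype V] [DecidableEq V] {G F : SimpleGraph V} (hconn : G.Connected)
    (fl : F.ConnectedComponent → ℕ)
    (tours : ∀ x : V, ∃ w : G.Walk x x,
      (∀ y, F.Reachable x y → y ∈ w.support) ∧ w.length ≤ fl (F.connectedComponentMk x)) :
    ∀ (R : Finset F.ConnectedComponent) (a : V) (w : G.Walk a a),
      (∀ v : V, F.connectedComponentMk v ∉ R → v ∈ w.support) →
      ∃ w' : G.Walk a a, (∀ v, v ∈ w'.support) ∧
        w'.length ≤ w.length + ∑ K ∈ R, (fl K + 2) := by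
  classical
  intro R
  induction R using Finset.strongInductionOn with
  | _ R ih =>
    intro a w hw
    by_cases hall : ∀ v : V, v ∈ w.support
    · exact ⟨w, hall, Nat.le_add_right _ _⟩
    · push_neg at hall
      obtain ⟨x, hx⟩ := hall
      obtain ⟨pw⟩ := hconn.preconnected a x
      obtain ⟨dart, _, hd1, hd2⟩ :=
        pw.exists_boundary_dart {y | y ∈ w.support} (start_mem_support w) hx
      set u := dart.fst with hu_def
      set y := dart.snd with hy_def
      have hd1' : u ∈ w.support := hd1
      have hd2' : y ∉ w.support := hd2
      have hyR : F.connectedComponentMk y ∈ R := by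
        by_contra h
        exact hd2' (hw _ h)
      obtain ⟨t, ht_cov, ht_len⟩ := tours y
      let piece : G.Walk u u :=
        Walk.cons dart.adj (t.append (Walk.cons dart.adj.symm Walk.nil))
      let w₂ : G.Walk u u := (w.rotate u hd1').append piece
      have ha2 : a ∈ w₂.support :=
        (mem_support_append_iff _ _).mpr
          (Or.inl ((mem_support_rotate _ _).mpr (start_mem_support w)))
      let w₃ : G.Walk a a := w₂.rotate a ha2
      have hmem₃ : ∀ {z : V}, z ∈ w.support ∨ z ∈ t.support → z ∈ w₃.support := by
        intro z hz
        rw [mem_support_rotate, mem_support_append_iff]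
        rcases hz with hz | hz
        · exact Or.inl ((mem_support_rotate _ _).mpr hz)
        · right
          show z ∈ (Walk.cons dart.adj (t.append (Walk.cons dart.adj.symm Walk.nil))).support
          rw [support_cons]
          exact List.mem_cons_of_mem _ ((mem_support_append_iff _ _).mpr (Or.inl hz))
      have hsupp₃ : ∀ v : V,
          F.connectedComponentMk v ∉ R.erase (F.connectedComponentMk y) → v ∈ w₃.support := by
        intro v hv
        rw [Finset.mem_erase, not_and_or] at hv
        rcases hv with hv | hv
        · push_neg at hv
          exact hmem₃ (Or.inr (ht_cov v (ConnectedComponent.exact hv.symm)))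
        · exact hmem₃ (Or.inl (hw v hv))
      have hlen₃ : w₃.length = w.length + t.length + 2 := by
        show (w₂.rotate a ha2).length = _
        rw [_root_.length_rotate]
        show ((w.rotate u hd1').append piece).length = _
        rw [length_append, _root_.length_rotate]
        have : piece.length = t.length + 2 := by
          show (Walk.cons dart.adj (t.append (Walk.cons dart.adj.symm Walk.nil))).length = _
          rw [length_cons, length_append, length_cons, length_nil]
        omega
      obtain ⟨w', hcov', hlen'⟩ :=
        ih (R.erase (F.connectedComponentMk y)) (Finset.erase_ssubset hyR) a w₃ hsupp₃
      refine ⟨w', hcov', ?_⟩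
      have hsum : fl (F.connectedComponentMk y) + 2 +
          ∑ K ∈ R.erase (F.connectedComponentMk y), (fl K + 2) = ∑ K ∈ R, (fl K + 2) :=
        Finset.add_sum_erase R (fun K => fl K + 2) hyR
      calc w'.length ≤ w₃.length + ∑ K ∈ R.erase (F.connectedComponentMk y), (fl K + 2) := hlen'
        _ ≤ w.length + ∑ K ∈ R, (fl K + 2) := by omega

lemma support_mapLe {G F : SimpleGraph V} (hle : F ≤ G) {a b : V} (p : F.Walk a b) :
    (p.mapLe hle).support = p.support := by
  induction p with
  | nil => rfl
  | cons h q ih =>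
    show _ :: (Walk.mapLe hle q).support = _ :: q.support
    rw [ih]


end Helpers

/-- If `F` is an even factor of a connected bridgeless cubic graph `G` on `n` vertices,
then `G` has a travelling salesman tour of length at most `n + 2 * |C_F| + |V_F| - 2`. -/
theorem tsp_tour_from_even_factor {V : Type*} [Fintype V] (G F : SimpleGraph V)
    (hconn : G.Connected) (hcubic : IsCubic G) (hbridgeless : Bridgeless G)
    (hF : IsEvenFactor G F) :
    ∃ (a : V) (w : G.Walk a a), (∀ v : V, v ∈ w.support) ∧
      (w.length : ℝ) ≤ (Fintype.card V : ℝ) + 2 * (numCirc F : ℝ) + (numIso F : ℝ) - 2 := by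
  classical
  obtain ⟨a⟩ := hconn.nonempty
  -- the component degree dichotomy
  have hcompdeg : ∀ x : V, deg F x = 2 → ∀ u, F.Reachable x u → deg F u = 2 := by
    intro x hx u hr
    rcases hF.2 u with h0 | h2
    · have hxu := reach_of_deg_zero h0 hr.symm
      rw [← hxu] at h0
      omega
    · exact h2
  -- the per-component budget
  set fl : F.ConnectedComponent → ℕ := fun K =>
    ((Finset.univ.filter (fun v : V => deg F v ≠ 0)).filter
      (fun v => F.connectedComponentMk v = K)).card with hfl_def
  -- value of fl on circuit components
  have hfl_circ : ∀ x : V, deg F x = 2 →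
      Nat.card {u | F.Reachable x u} = fl (F.connectedComponentMk x) := by
    intro x hx
    have hset : {u | F.Reachable x u} =
        ↑((Finset.univ.filter (fun v : V => deg F v ≠ 0)).filter
          (fun v => F.connectedComponentMk v = F.connectedComponentMk x)) := by
      ext u
      simp only [Set.mem_setOf_eq, Finset.coe_filter, Finset.mem_filter, Finset.mem_univ,
        true_and, Set.mem_setOf_eq, ConnectedComponent.eq]
      constructor
      · intro hr
        exact ⟨by rw [hcompdeg x hx u hr]; omega, hr.symm⟩
      · exact fun h => h.2.symm
    rw [hset, Nat.card_coe_set_eq, Set.ncard_coe_finset]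
  -- tours
  have tours : ∀ x : V, ∃ w : G.Walk x x,
      (∀ y, F.Reachable x y → y ∈ w.support) ∧ w.length ≤ fl (F.connectedComponentMk x) := by
    intro x
    rcases hF.2 x with h0 | h2
    · refine ⟨Walk.nil, ?_, by simp⟩
      intro y hy
      rw [reach_of_deg_zero h0 hy]
      exact start_mem_support _
    · obtain ⟨wF, hcov, hlen⟩ := circuit_tour (hcompdeg x h2)
      refine ⟨wF.mapLe hF.1, ?_, ?_⟩
      · intro y hy
        rw [support_mapLe]
        exact hcov y hy
      · show (wF.mapLe hF.1).length ≤ _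
        rw [Walk.mapLe, Walk.length_map, ← hfl_circ x h2]
        exact hlen
    -- counting
  set N₂ : ℕ := (Finset.univ.filter (fun v : V => deg F v ≠ 0)).card with hN₂
  have hsum_fl : ∑ K : F.ConnectedComponent, fl K = N₂ := by
    rw [hN₂]
    exact (Finset.card_eq_sum_card_fiberwise
      (f := fun v => F.connectedComponentMk v)
      (fun x _ => Finset.mem_univ _)).symm
  have hiso : numIso F = (Finset.univ.filter (fun v : V => deg F v = 0)).card := by
    rw [numIso, Nat.card_eq_fintype_card, Fintype.card_subtype]
  have hNsplit : N₂ + numIso F = Fintype.card V := by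
    rw [hiso, hN₂, ← Finset.card_univ (α := V)]
    have h := Finset.card_filter_add_card_filter_not
      (s := (Finset.univ : Finset V)) (p := fun v : V => deg F v = 0)
    have e : Finset.univ.filter (fun a : V => ¬ (fun v : V => deg F v = 0) a) =
        Finset.univ.filter (fun v : V => deg F v ≠ 0) :=
      Finset.filter_congr (fun x _ => Iff.rfl)
    rw [e] at h
    omega
  -- components count
  set q : F.ConnectedComponent → Prop :=
    fun K => ∃ v, F.connectedComponentMk v = K ∧ deg F v ≠ 0 with hq_def
  have hsupp_circ : ∀ {K : F.ConnectedComponent}, q K → IsCircuitOf F K.supp := by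
    intro K hK
    simp only [hq_def] at hK
    obtain ⟨v, hv, hdv⟩ := hK
    refine ⟨v, hdv, ?_⟩
    ext u
    rw [ConnectedComponent.mem_supp_iff, ← hv, Set.mem_setOf_eq, ConnectedComponent.eq]
    exact ⟨Reachable.symm, Reachable.symm⟩
  have hqcard : Nat.card {K // q K} = numCirc F := by
    rw [numCirc]
    apply Nat.card_congr
    refine Equiv.ofBijective (fun K => ⟨K.1.supp, hsupp_circ K.2⟩) ⟨?_, ?_⟩
    · intro K K' h
      exact Subtype.ext (ConnectedComponent.supp_injective (congrArg Subtype.val h))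
    · rintro ⟨C, v, hdv, rfl⟩
      refine ⟨⟨F.connectedComponentMk v, by simp only [hq_def]; exact ⟨v, rfl, hdv⟩⟩, ?_⟩
      apply Subtype.ext
      show (F.connectedComponentMk v).supp = _
      ext u
      rw [ConnectedComponent.mem_supp_iff, Set.mem_setOf_eq, ConnectedComponent.eq]
      exact ⟨Reachable.symm, Reachable.symm⟩
  have hkeyq : ∀ v : {v : V // deg F v = 0}, ¬ q (F.connectedComponentMk v.1) := by
    intro v
    simp only [hq_def]
    rintro ⟨u, hu, hdu⟩
    have hr : F.Reachable v.1 u := (ConnectedComponent.exact hu).symm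
    rw [reach_of_deg_zero v.2 hr] at hdu
    exact hdu v.2
  have hnqcard : Nat.card {K // ¬ q K} = numIso F := by
    rw [numIso]
    apply Nat.card_congr
    apply Equiv.symm
    refine Equiv.ofBijective (fun v => ⟨F.connectedComponentMk v.1, hkeyq v⟩) ⟨?_, ?_⟩
    · intro v v' h
      have hr : F.Reachable v.1 v'.1 := ConnectedComponent.exact (congrArg Subtype.val h)
      exact Subtype.ext (reach_of_deg_zero v.2 hr).symm
    · rintro ⟨K, hK⟩
      obtain ⟨v, rfl⟩ := K.exists_rep
      simp only [hq_def] at hK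
      push_neg at hK
      exact ⟨⟨v, by simpa using hK v rfl⟩, rfl⟩
  have hcomp_card : Fintype.card F.ConnectedComponent = numCirc F + numIso F := by
    rw [← hqcard, ← hnqcard]
    have h1 : Nat.card {K // q K} = (Finset.univ.filter (fun x => q x)).card := by
      rw [Nat.card_eq_fintype_card, Fintype.card_subtype]
    have h2 : Nat.card {K // ¬ q K} = (Finset.univ.filter (fun x => ¬ q x)).card := by
      rw [Nat.card_eq_fintype_card, Fintype.card_subtype]
    have h := Finset.card_filter_add_card_filter_not
      (s := (Finset.univ : Finset F.ConnectedComponent)) (p := q)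
    have e1 : (Finset.univ.filter (fun x => q x)).card = (Finset.univ.filter q).card := rfl
    have e2 : (Finset.univ.filter (fun x => ¬ q x)).card =
        (Finset.univ.filter (fun a => ¬ q a)).card := rfl
    rw [← Finset.card_univ, h1, h2]
    omega
  -- assemble
  obtain ⟨w₀, hw₀cov, hw₀len⟩ := tours a
  have hinv : ∀ v : V,
      F.connectedComponentMk v ∉ Finset.univ.erase (F.connectedComponentMk a) →
        v ∈ w₀.support := by
    intro v hv
    have : F.connectedComponentMk v = F.connectedComponentMk a := by
      by_contra hne
      exact hv (Finset.mem_erase.mpr ⟨hne, Finset.mem_univ _⟩)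
    exact hw₀cov v (ConnectedComponent.exact this).symm
  obtain ⟨w', hcov', hlen'⟩ := assemble hconn fl tours
    (Finset.univ.erase (F.connectedComponentMk a)) a w₀ hinv
  refine ⟨a, w', hcov', ?_⟩
  -- arithmetic
  have hsum_split : fl (F.connectedComponentMk a) + 2 +
      ∑ K ∈ Finset.univ.erase (F.connectedComponentMk a), (fl K + 2) =
      ∑ K : F.ConnectedComponent, (fl K + 2) :=
    Finset.add_sum_erase _ (fun K => fl K + 2) (Finset.mem_univ _)
  have hsum_total : ∑ K : F.ConnectedComponent, (fl K + 2) =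
      N₂ + 2 * Fintype.card F.ConnectedComponent := by
    rw [Finset.sum_add_distrib, hsum_fl, Finset.sum_const, Finset.card_univ, smul_eq_mul,
      mul_comm]
  have hkey : w'.length + 2 ≤ N₂ + 2 * (numCirc F + numIso F) := by
    rw [← hcomp_card, ← hsum_total, ← hsum_split]
    omega
  have hcast : (w'.length : ℝ) + 2 ≤ (N₂ : ℝ) + 2 * ((numCirc F : ℝ) + (numIso F : ℝ)) := by
    exact_mod_cast hkey
  have hncast : (N₂ : ℝ) + (numIso F : ℝ) = (Fintype.card V : ℝ) := by exact_mod_cast hNsplit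
  linarith
end

section
/- Let G be a cubic graph with a bounded even factor F, let X be an X-circuit of F with no bounded isolated vertices (so X equals its circuit C_X), and let C be a circuit of G that intersects X with V(C) − V(X) nonempty. Then there exists a circuit C' of F with C' ≠ C_X that intersects C. -/
open SimpleGraph

variable {V : Type*}

inductive BoundedTo (G F : SimpleGraph V) (C : Set V) : V → Prop
  | two_in (v a b : V) (h0 : deg F v = 0) (hab : a ≠ b) (ha : G.Adj v a) (hb : G.Adj v b)
      (haC : a ∈ C) (hbC : b ∈ C) : BoundedTo G F C v
  | one_one (v a b : V) (h0 : deg F v = 0) (hab : a ≠ b) (ha : G.Adj v a) (hb : G.Adj v b)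
      (haC : a ∈ C) (hb0 : deg F b = 0) (hbB : BoundedTo G F C b) : BoundedTo G F C v
  | two_iso (v a b : V) (h0 : deg F v = 0) (hab : a ≠ b) (ha : G.Adj v a) (hb : G.Adj v b)
      (ha0 : deg F a = 0) (haB : BoundedTo G F C a) (hb0 : deg F b = 0)
      (hbB : BoundedTo G F C b) : BoundedTo G F C v

def IsBEFactor (G F : SimpleGraph V) : Prop :=
  IsEvenFactor G F ∧ ∀ v, deg F v = 0 → ∃ C, IsCircuitOf F C ∧ BoundedTo G F C v

def IsXCircuitOf (G F : SimpleGraph V) (X : Set V) : Prop :=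
  ∃ C, IsCircuitOf F C ∧ X = C ∪ {v | deg F v = 0 ∧ BoundedTo G F C v}


/- Auxiliary lemmas -/

lemma nbr_finite {G : SimpleGraph V} {v : V} (h3 : deg G v = 3) : (G.neighborSet v).Finite := by
  rw [deg, Nat.card_coe_set_eq] at h3
  by_contra hinf
  rw [Set.Infinite.ncard hinf] at h3
  omega

lemma four_nbrs {G : SimpleGraph V} {v p q a b : V} (h3 : deg G v = 3)
    (hp : G.Adj v p) (hq : G.Adj v q) (hpq : p ≠ q)
    (ha : G.Adj v a) (hb : G.Adj v b) (hab : a ≠ b) :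
    a = p ∨ a = q ∨ b = p ∨ b = q := by
  by_contra hcon
  push_neg at hcon
  obtain ⟨h1, h2, h3', h4⟩ := hcon
  have hfin := nbr_finite h3
  have hsub : ({a, b, p, q} : Set V) ⊆ G.neighborSet v := by
    intro x hx
    simp only [Set.mem_insert_iff, Set.mem_singleton_iff] at hx
    rcases hx with rfl | rfl | rfl | rfl <;> assumption
  have h4' : ({a, b, p, q} : Set V).ncard = 4 := by
    rw [Set.ncard_insert_of_notMem (by simp [hab, h1, h2]),
      Set.ncard_insert_of_notMem (by simp [h3', h4]),
      Set.ncard_insert_of_notMem (by simp [hpq]), Set.ncard_singleton]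
  have hle := Set.ncard_le_ncard hsub hfin
  rw [h4'] at hle
  rw [deg, Nat.card_coe_set_eq] at h3
  omega

lemma iso_nbr_empty {G F : SimpleGraph V} (hcubic : IsCubic G) (hFG : F ≤ G) {v : V}
    (h0 : deg F v = 0) : F.neighborSet v = ∅ := by
  have hfin : (F.neighborSet v).Finite :=
    (nbr_finite (hcubic v)).subset (fun x hx => hFG hx)
  rw [deg, Nat.card_coe_set_eq] at h0
  exact (Set.ncard_eq_zero hfin).mp h0

lemma iso_reachable {F : SimpleGraph V} {v x : V} (h : F.neighborSet v = ∅)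
    (hr : F.Reachable v x) : v = x := by
  obtain ⟨w⟩ := hr
  cases w with
  | nil => rfl
  | cons hadj p => exact absurd (Set.eq_empty_iff_forall_notMem.mp h _ hadj) not_false

lemma mem_circuit_deg_ne {G F : SimpleGraph V} (hcubic : IsCubic G) (hFG : F ≤ G)
    {D : Set V} (hD : IsCircuitOf F D) {x : V} (hx : x ∈ D) : deg F x ≠ 0 := by
  obtain ⟨d, hd0, rfl⟩ := hD
  intro h0
  exact hd0 ((iso_reachable (iso_nbr_empty hcubic hFG h0) hx.symm) ▸ h0)

lemma circuits_disjoint {F : SimpleGraph V} {D C : Set V} (hD : IsCircuitOf F D)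
    (hC : IsCircuitOf F C) (hne : D ≠ C) {x : V} (hxD : x ∈ D) (hxC : x ∈ C) : False := by
  obtain ⟨d, _, rfl⟩ := hD
  obtain ⟨c, _, rfl⟩ := hC
  apply hne
  ext u
  constructor
  · intro hu; exact hxC.trans (hxD.symm.trans hu)
  · intro hu; exact hxD.trans (hxC.symm.trans hu)

lemma closed_mem_tail {G : SimpleGraph V} {v : V} {p : G.Walk v v} (hn : ¬p.Nil) {x : V}
    (hx : x ∈ p.support) : x ∈ p.support.tail := by
  cases p with
  | nil => exact absurd SimpleGraph.Walk.nil_nil hn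
  | cons h q =>
    rw [SimpleGraph.Walk.support_cons] at hx ⊢
    rw [List.tail_cons]
    rcases List.mem_cons.mp hx with rfl | hx'
    · exact SimpleGraph.Walk.end_mem_support q
    · exact hx'

lemma cycle_start_nbrs {G : SimpleGraph V} {v : V} {c : G.Walk v v} (hc : c.IsCycle) :
    ∃ p q, p ≠ q ∧ G.Adj v p ∧ G.Adj v q ∧ p ∈ c.support ∧ q ∈ c.support := by
  cases c with
  | nil => exact absurd hc SimpleGraph.Walk.IsCycle.not_of_nil
  | cons h p =>
    rename_i x
    -- h : G.Adj v x, p : G.Walk x v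
    have hdn : (SimpleGraph.Walk.cons h p).darts ≠ [] := by
      rw [SimpleGraph.Walk.darts_cons]; simp
    set d := (SimpleGraph.Walk.cons h p).darts.getLast hdn with hd_def
    have hdsnd : d.snd = v := by rw [hd_def, SimpleGraph.Walk.getLast_darts_eq_lastDart]; rfl
    have hadjq : G.Adj v d.fst := (hdsnd ▸ d.adj).symm
    have hqmem : d.fst ∈ (SimpleGraph.Walk.cons h p).support :=
      SimpleGraph.Walk.dart_fst_mem_support_of_mem_darts _ (List.getLast_mem hdn)
    have hxmem : x ∈ (SimpleGraph.Walk.cons h p).support := by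
      rw [SimpleGraph.Walk.support_cons]
      exact List.mem_cons_of_mem _ p.start_mem_support
    refine ⟨x, d.fst, ?_, h, hadjq, hxmem, hqmem⟩
    -- show x ≠ d.fst
    intro heq
    have hlen := hc.three_le_length
    rw [SimpleGraph.Walk.length_cons] at hlen
    have hpne : p.edges ≠ [] := by
      intro hnil
      have := congrArg List.length hnil
      rw [SimpleGraph.Walk.length_edges] at this
      simp only [List.length_nil] at this
      omega
    have hnodup := hc.isTrail.edges_nodup
    rw [SimpleGraph.Walk.edges_cons] at hnodup
    have hnotmem := (List.nodup_cons.mp hnodup).1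
    apply hnotmem
    -- show s(v,x) ∈ p.edges ; it equals the last edge
    have hpdne : p.darts ≠ [] := by
      intro hnil
      have := congrArg List.length hnil
      rw [SimpleGraph.Walk.length_darts] at this
      simp only [List.length_nil] at this
      omega
    have hdmem : d ∈ p.darts := by
      have hdmem0 : d ∈ (SimpleGraph.Walk.cons h p).darts := List.getLast_mem hdn
      rw [SimpleGraph.Walk.darts_cons, List.mem_cons] at hdmem0
      rcases hdmem0 with heq' | hdmem
      · have hsnd : d.snd = x := by rw [heq']
        have hxv : x = v := hsnd ▸ hdsnd
        exact absurd hxv.symm h.ne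
      · exact hdmem
    have hemem : d.edge ∈ p.edges := by
      show d.edge ∈ p.darts.map SimpleGraph.Dart.edge
      exact List.mem_map_of_mem hdmem
    have hde : d.edge = s(v, x) := by
      rw [show d.edge = s(d.fst, d.snd) from rfl, hdsnd, ← heq]
      exact (Sym2.eq_swap)
    rwa [hde] at hemem

lemma cycle_neighbors {G : SimpleGraph V} {a : V} {w : G.Walk a a} (hc : w.IsCycle) {v : V}
    (hv : v ∈ w.support) :
    ∃ p q, p ≠ q ∧ G.Adj v p ∧ G.Adj v q ∧ p ∈ w.support ∧ q ∈ w.support := by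
  classical
  have hcc : (w.rotate v hv).IsCycle := hc.rotate hv
  obtain ⟨p, q, hpq, hp, hq, hps, hqs⟩ := cycle_start_nbrs hcc
  have hmem : ∀ x, x ∈ (w.rotate v hv).support → x ∈ w.support := by
    intro x hx
    have h1 : x ∈ (w.rotate v hv).support.tail := closed_mem_tail hcc.not_nil hx
    have h2 := (SimpleGraph.Walk.support_rotate w v hv).mem_iff.mp h1
    rw [w.support_eq_cons]
    exact List.mem_cons_of_mem _ h2
  exact ⟨p, q, hpq, hp, hq, hmem p hps, hmem q hqs⟩

/-- If `X = C_X` is an X-circuit of a bounded even factor `F` of a cubic graph `G`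
with no bounded isolated vertices, and `C` is a circuit of `G` intersecting `X` with
`V(C) - V(X)` nonempty, then some circuit `C' ≠ C_X` of `F` intersects `C`. -/
theorem swap_possible {V : Type*} (G F : SimpleGraph V) (hcubic : IsCubic G)
    (hBE : IsBEFactor G F) (CX : Set V) (hCX : IsCircuitOf F CX)
    (hnoiso : ¬ ∃ v, deg F v = 0 ∧ BoundedTo G F CX v)
    (a : V) (w : G.Walk a a) (hcyc : w.IsCycle)
    (hmeets : ∃ v ∈ w.support, v ∈ CX) (hleaves : ∃ v ∈ w.support, v ∉ CX) :
    ∃ C' : Set V, IsCircuitOf F C' ∧ C' ≠ CX ∧ ∃ v ∈ w.support, v ∈ C' := by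
  have hFG : F ≤ G := hBE.1.1
  by_cases hex : ∃ y ∈ w.support, y ∉ CX ∧ deg F y ≠ 0
  · obtain ⟨y, hyw, hyn, hy0⟩ := hex
    refine ⟨{u | F.Reachable y u}, ⟨y, hy0, rfl⟩, ?_, y, hyw, Reachable.refl y⟩
    intro heq
    exact hyn (heq ▸ (show y ∈ {u | F.Reachable y u} from Reachable.refl y))
  · push_neg at hex
    exfalso
    -- every support vertex outside CX is isolated
    have hiso : ∀ y ∈ w.support, y ∉ CX → deg F y = 0 := hex
    -- no support vertex outside CX is bounded to any circuit D ≠ CX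
    have hCXdeg : ∀ x ∈ CX, deg F x ≠ 0 := fun x hx => mem_circuit_deg_ne hcubic hFG hCX hx
    have key : ∀ D, IsCircuitOf F D → D ≠ CX → ∀ x, BoundedTo G F D x →
        x ∈ w.support → x ∉ CX → False := by
      intro D hD hDne x hb
      induction hb with
      | two_in v s t h0 hst hs ht hsD htD =>
        intro hvw hvCX
        obtain ⟨p, q, hpq, hp, hq, hpw, hqw⟩ := cycle_neighbors hcyc hvw
        have hDcontra : ∀ c, c ∈ D → c ∈ w.support → False := by
          intro c hcD hcw
          have hcn : c ∉ CX := fun hc => circuits_disjoint hD hCX hDne hcD hc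
          exact mem_circuit_deg_ne hcubic hFG hD hcD (hiso c hcw hcn)
        rcases four_nbrs (hcubic v) hp hq hpq hs ht hst with rfl | rfl | rfl | rfl
        · exact hDcontra _ hsD hpw
        · exact hDcontra _ hsD hqw
        · exact hDcontra _ htD hpw
        · exact hDcontra _ htD hqw
      | one_one v s t h0 hst hs ht hsD ht0 htB ih =>
        intro hvw hvCX
        obtain ⟨p, q, hpq, hp, hq, hpw, hqw⟩ := cycle_neighbors hcyc hvw
        have hDcontra : ∀ c, c ∈ D → c ∈ w.support → False := by
          intro c hcD hcw
          have hcn : c ∉ CX := fun hc => circuits_disjoint hD hCX hDne hcD hc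
          exact mem_circuit_deg_ne hcubic hFG hD hcD (hiso c hcw hcn)
        have htn : t ∉ CX := fun hc => hCXdeg t hc ht0
        rcases four_nbrs (hcubic v) hp hq hpq hs ht hst with rfl | rfl | rfl | rfl
        · exact hDcontra _ hsD hpw
        · exact hDcontra _ hsD hqw
        · exact ih hpw htn
        · exact ih hqw htn
      | two_iso v s t h0 hst hs ht hs0 hsB ht0 htB ihs iht =>
        intro hvw hvCX
        obtain ⟨p, q, hpq, hp, hq, hpw, hqw⟩ := cycle_neighbors hcyc hvw
        have hsn : s ∉ CX := fun hc => hCXdeg s hc hs0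
        have htn : t ∉ CX := fun hc => hCXdeg t hc ht0
        rcases four_nbrs (hcubic v) hp hq hpq hs ht hst with rfl | rfl | rfl | rfl
        · exact ihs hpw hsn
        · exact ihs hqw hsn
        · exact iht hpw htn
        · exact iht hqw htn
    obtain ⟨v0, hv0w, hv0n⟩ := hleaves
    have hv0iso := hiso v0 hv0w hv0n
    obtain ⟨D, hD, hbd⟩ := hBE.2 v0 hv0iso
    have hne : D ≠ CX := by rintro rfl; exact hnoiso ⟨v0, hv0iso, hbd⟩
    exact key D hD hne v0 hbd hv0w hv0n
end

section
/- Let G be a bridgeless cubic graph with even factor F, and let C4 = v1v2v3v4 be a chordless 4-circuit of G whose boundary edges lie in two distinct circuits C1, C2 of F, with v1v2 ∈ C1 and v3v4 ∈ C2. Then F' = (F − {v1v2, v3v4}) ∪ {v1v4, v2v3} is an even factor in which C1 and C2 are merged into a single circuit, all other components are unchanged, and c(F) − c(F') = 2. -/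
open SimpleGraph

variable {V : Type*}

/-! ### Auxiliary lemmas -/


lemma deg_eq_ncard (F : SimpleGraph V) (v : V) : deg F v = (F.neighborSet v).ncard := rfl

lemma deg_ne_zero_of_adj [Finite V] {F : SimpleGraph V} {a b : V} (h : F.Adj a b) :
    deg F a ≠ 0 := by
  rw [deg_eq_ncard]
  have : 0 < (F.neighborSet a).ncard := (Set.ncard_pos (Set.toFinite _)).2 ⟨b, h⟩
  omega

/-- Transfer of reachability along a predicate-preserving adjacency relation. -/
lemma reach_transfer {A B : SimpleGraph V} {P : V → Prop}
    (hP : ∀ x y, P x → A.Adj x y → P y ∧ B.Reachable x y) :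
    ∀ {u v : V}, P u → A.Reachable u v → P v ∧ B.Reachable u v := by
  intro u v hu ⟨w⟩
  induction w with
  | nil => exact ⟨hu, Reachable.refl _⟩
  | cons h p ih =>
      obtain ⟨hy, hr⟩ := hP _ _ hu h
      obtain ⟨hv, hr'⟩ := ih hy
      exact ⟨hv, hr.trans hr'⟩

lemma class_eq_of_reachable {F : SimpleGraph V} {v x : V} (h : F.Reachable v x) :
    {u | F.Reachable v u} = {u | F.Reachable x u} := by
  ext u; exact ⟨fun hu => h.symm.trans hu, fun hu => h.trans hu⟩

/-- In a graph all of whose degrees are 0 or 2, no edge is a bridge. -/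
lemma even_no_bridge [Fintype V] (H : SimpleGraph V) (hdeg : ∀ v, deg H v = 0 ∨ deg H v = 2)
    {a b : V} (hab : H.Adj a b) : (H.deleteEdges {s(a, b)}).Reachable a b := by
  classical
  by_contra hnr
  set H' := H.deleteEdges {s(a, b)} with hH'
  have hne := hab.ne
  have hNa : H'.neighborSet a = H.neighborSet a \ {b} := by
    ext y
    simp only [hH', mem_neighborSet, deleteEdges_adj, Set.mem_singleton_iff, Set.mem_diff,
      Sym2.eq_iff]
    tauto
  have hNother : ∀ v, v ≠ a → v ≠ b → H'.neighborSet v = H.neighborSet v := by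
    intro v hva hvb
    ext y
    simp only [hH', mem_neighborSet, deleteEdges_adj, Set.mem_singleton_iff, Sym2.eq_iff]
    tauto
  have hdega : deg H a = 2 := (hdeg a).resolve_left (deg_ne_zero_of_adj hab)
  have hdega' : deg H' a = 1 := by
    have hm : b ∈ H.neighborSet a := hab
    rw [deg_eq_ncard, hNa, Set.ncard_diff_singleton_of_mem hm,
      ← deg_eq_ncard, hdega]
  set S : Set V := {u | H'.Reachable a u} with hS
  have haS : a ∈ S := Reachable.refl a
  have hbS : b ∉ S := hnr
  have hclosed : ∀ (x : V) (y : V), x ∈ S → H'.Adj x y → y ∈ S := fun x y hx h =>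
    Reachable.trans hx h.reachable
  set K := H'.induce S with hK
  haveI : Fintype ↥S := Fintype.ofFinite ↥S
  haveI : DecidableRel K.Adj := Classical.decRel _
  have hdegK : ∀ x : ↥S, K.degree x = deg H' x.1 := by
    intro x
    rw [← card_neighborSet_eq_degree, deg, ← Nat.card_eq_fintype_card]
    refine Nat.card_congr ⟨fun y => ⟨y.1.1, y.2⟩, fun z => ⟨⟨z.1, hclosed _ _ x.2 z.2⟩, z.2⟩,
      fun y => rfl, fun z => rfl⟩
  have hodd : ∀ x : ↥S, Odd (K.degree x) ↔ x = ⟨a, haS⟩ := by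
    intro x
    rw [hdegK]
    constructor
    · intro hx
      by_contra hxa
      have hxa' : x.1 ≠ a := fun h => hxa (Subtype.ext h)
      have hxb : x.1 ≠ b := fun h => hbS (h ▸ x.2)
      rw [deg_eq_ncard, hNother _ hxa' hxb, ← deg_eq_ncard] at hx
      rcases hdeg x.1 with h | h <;> rw [h] at hx <;> revert hx <;> decide
    · rintro rfl
      rw [hdega']
      exact odd_one
  have heven := K.even_card_odd_degree_vertices
  have : ({x : ↥S | Odd (K.degree x)} : Finset ↥S) = {⟨a, haS⟩} := by
    ext x
    simp only [Finset.mem_filter, Finset.mem_univ, true_and, Finset.mem_singleton]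
    exact hodd x
  rw [this] at heven
  simp at heven

lemma swap_ncard [Fintype V] {F : SimpleGraph V} {v old new : V}
    (hold : F.Adj v old) (hnew : ¬ F.Adj v new) (hdeg : deg F v = 2) :
    (insert new (F.neighborSet v \ {old})).ncard = 2 := by
  have hm : old ∈ F.neighborSet v := hold
  have hn : new ∉ F.neighborSet v \ {old} := fun h => hnew h.1
  rw [Set.ncard_insert_of_notMem hn (Set.toFinite _),
    Set.ncard_diff_singleton_of_mem hm, ← deg_eq_ncard, hdeg]

set_option maxHeartbeats 2000000 in
/-- The 4-swap: replacing the edges `v1v2 ∈ C1`, `v3v4 ∈ C2` of an even factor `F` by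
`v1v4`, `v2v3` along a chordless 4-circuit yields an even factor in which `C1` and `C2`
are merged into one circuit, all other components are unchanged, and the cost drops
by exactly 2. -/
theorem four_swap {V : Type*} [Fintype V] (G F : SimpleGraph V)
    (hcubic : IsCubic G) (hbridgeless : Bridgeless G) (hF : IsEvenFactor G F)
    (v1 v2 v3 v4 : V) (h13 : v1 ≠ v3) (h24 : v2 ≠ v4)
    (a12 : G.Adj v1 v2) (a23 : G.Adj v2 v3) (a34 : G.Adj v3 v4) (a41 : G.Adj v4 v1)
    (n13 : ¬ G.Adj v1 v3) (n24 : ¬ G.Adj v2 v4)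
    (C1 C2 : Set V) (hC1 : IsCircuitOf F C1) (hC2 : IsCircuitOf F C2) (hne : C1 ≠ C2)
    (e12 : s(v1, v2) ∈ F.edgeSet) (e34 : s(v3, v4) ∈ F.edgeSet)
    (m1 : v1 ∈ C1) (m2 : v2 ∈ C1) (m3 : v3 ∈ C2) (m4 : v4 ∈ C2) :
    let F' := SimpleGraph.fromEdgeSet
      ((F.edgeSet \ {s(v1, v2), s(v3, v4)}) ∪ {s(v1, v4), s(v2, v3)})
    IsEvenFactor G F' ∧
    (∃ C : Set V, IsCircuitOf F' C ∧ C1 ⊆ C ∧ C2 ⊆ C) ∧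
    (∀ C : Set V, IsCircuitOf F C → C ≠ C1 → C ≠ C2 → IsCircuitOf F' C) ∧
    (∀ v, deg F' v = 0 ↔ deg F v = 0) ∧
    cost F - cost F' = 2 := by
  classical
  intro F'
  have hF'def : F' = SimpleGraph.fromEdgeSet
      ((F.edgeSet \ {s(v1, v2), s(v3, v4)}) ∪ {s(v1, v4), s(v2, v3)}) := rfl
  -- distinctness
  have d12 : v1 ≠ v2 := a12.ne
  have d23 : v2 ≠ v3 := a23.ne
  have d34 : v3 ≠ v4 := a34.ne
  have d14 : v1 ≠ v4 := fun h => a41.ne h.symm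
  have d21 := d12.symm
  have d32 := d23.symm
  have d43 := d34.symm
  have d41 := d14.symm
  have h31 := h13.symm
  have h42 := h24.symm
  have fadj12 : F.Adj v1 v2 := e12
  have fadj34 : F.Adj v3 v4 := e34
  -- classes
  have hclass1 : ∀ x ∈ C1, C1 = {u | F.Reachable x u} := by
    obtain ⟨w, -, hEq⟩ := hC1
    intro x hx
    rw [hEq] at hx ⊢
    exact class_eq_of_reachable hx
  have hclass2 : ∀ x ∈ C2, C2 = {u | F.Reachable x u} := by
    obtain ⟨w, -, hEq⟩ := hC2
    intro x hx
    rw [hEq] at hx ⊢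
    exact class_eq_of_reachable hx
  have hdisj : ∀ x, x ∈ C1 → x ∈ C2 → False := fun x h1 h2 =>
    hne ((hclass1 x h1).trans (hclass2 x h2).symm)
  have hcl1 : ∀ x y, x ∈ C1 → F.Adj x y → y ∈ C1 := fun x y hx h => by
    rw [hclass1 x hx]; exact h.reachable
  have hcl2 : ∀ x y, x ∈ C2 → F.Adj x y → y ∈ C2 := fun x y hx h => by
    rw [hclass2 x hx]; exact h.reachable
  have nF14 : ¬ F.Adj v1 v4 := fun h => hdisj v4 (hcl1 _ _ m1 h) m4
  have nF23 : ¬ F.Adj v2 v3 := fun h => hdisj v3 (hcl1 _ _ m2 h) m3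
  -- adjacency characterization
  have hne_of : ∀ {x y a b : V}, a ≠ b → s(x, y) = s(a, b) → x ≠ y := by
    intro x y a b hab h
    rcases Sym2.eq_iff.1 h with ⟨rfl, rfl⟩ | ⟨rfl, rfl⟩
    · exact hab
    · exact hab.symm
  have hAdj : ∀ x y, F'.Adj x y ↔
      ((F.Adj x y ∧ s(x, y) ≠ s(v1, v2) ∧ s(x, y) ≠ s(v3, v4)) ∨
        s(x, y) = s(v1, v4) ∨ s(x, y) = s(v2, v3)) := by
    intro x y
    rw [hF'def, fromEdgeSet_adj]
    simp only [Set.mem_union, Set.mem_diff, Set.mem_insert_iff, Set.mem_singleton_iff,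
      mem_edgeSet]
    constructor
    · rintro ⟨h, -⟩; tauto
    · intro h
      refine ⟨by tauto, ?_⟩
      rcases h with ⟨h, -, -⟩ | h | h
      · exact h.ne
      · exact hne_of d14 h
      · exact hne_of d23 h
  -- neighbor sets
  have N1 : F'.neighborSet v1 = insert v4 (F.neighborSet v1 \ {v2}) := by
    ext y
    simp only [mem_neighborSet, hAdj, ne_eq, Sym2.eq_iff, Set.mem_insert_iff, Set.mem_diff,
      Set.mem_singleton_iff]
    tauto
  have N2 : F'.neighborSet v2 = insert v3 (F.neighborSet v2 \ {v1}) := by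
    ext y
    simp only [mem_neighborSet, hAdj, ne_eq, Sym2.eq_iff, Set.mem_insert_iff, Set.mem_diff,
      Set.mem_singleton_iff]
    tauto
  have N3 : F'.neighborSet v3 = insert v2 (F.neighborSet v3 \ {v4}) := by
    ext y
    simp only [mem_neighborSet, hAdj, ne_eq, Sym2.eq_iff, Set.mem_insert_iff, Set.mem_diff,
      Set.mem_singleton_iff]
    tauto
  have N4 : F'.neighborSet v4 = insert v1 (F.neighborSet v4 \ {v3}) := by
    ext y
    simp only [mem_neighborSet, hAdj, ne_eq, Sym2.eq_iff, Set.mem_insert_iff, Set.mem_diff,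
      Set.mem_singleton_iff]
    tauto
  have Ngen : ∀ v, v ≠ v1 → v ≠ v2 → v ≠ v3 → v ≠ v4 →
      F'.neighborSet v = F.neighborSet v := by
    intro v h1 h2 h3 h4
    ext y
    simp only [mem_neighborSet, hAdj, Sym2.eq_iff]
    constructor
    · rintro (⟨h, -, -⟩ | h | h)
      · exact h
      · rcases h with ⟨rfl, -⟩ | ⟨rfl, -⟩ <;> [exact absurd rfl h1; exact absurd rfl h4]
      · rcases h with ⟨rfl, -⟩ | ⟨rfl, -⟩ <;> [exact absurd rfl h2; exact absurd rfl h3]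
    · intro h
      left
      refine ⟨h, ?_, ?_⟩ <;> intro hc <;>
        rcases Sym2.eq_iff.1 hc with ⟨rfl, -⟩ | ⟨rfl, -⟩ <;> simp_all
  -- degrees
  have degv1 : deg F v1 = 2 := (hF.2 v1).resolve_left (deg_ne_zero_of_adj fadj12)
  have degv2 : deg F v2 = 2 := (hF.2 v2).resolve_left (deg_ne_zero_of_adj fadj12.symm)
  have degv3 : deg F v3 = 2 := (hF.2 v3).resolve_left (deg_ne_zero_of_adj fadj34)
  have degv4 : deg F v4 = 2 := (hF.2 v4).resolve_left (deg_ne_zero_of_adj fadj34.symm)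
  have degF'eq : ∀ v, deg F' v = deg F v := by
    intro v
    by_cases h1 : v = v1
    · subst h1
      rw [deg_eq_ncard, N1, swap_ncard fadj12 nF14 degv1, degv1]
    by_cases h2 : v = v2
    · subst h2
      rw [deg_eq_ncard, N2, swap_ncard fadj12.symm nF23 degv2, degv2]
    by_cases h3 : v = v3
    · subst h3
      rw [deg_eq_ncard, N3, swap_ncard fadj34 (fun h => nF23 h.symm) degv3, degv3]
    by_cases h4 : v = v4
    · subst h4
      rw [deg_eq_ncard, N4, swap_ncard fadj34.symm (fun h => nF14 h.symm) degv4, degv4]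
    rw [deg, deg, Ngen v h1 h2 h3 h4]
  -- F' is an even factor
  have hle : F' ≤ G := by
    intro x y h
    rw [hAdj] at h
    rcases h with ⟨h, -, -⟩ | h | h
    · exact hF.1 h
    · rcases Sym2.eq_iff.1 h with ⟨rfl, rfl⟩ | ⟨rfl, rfl⟩
      · exact a41.symm
      · exact a41
    · rcases Sym2.eq_iff.1 h with ⟨rfl, rfl⟩ | ⟨rfl, rfl⟩
      · exact a23
      · exact a23.symm
  have hEF : IsEvenFactor G F' := ⟨hle, fun v => (degF'eq v) ▸ hF.2 v⟩
  -- reachability: v1-v2 and v3-v4 within F'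
  have r12 : F'.Reachable v1 v2 := by
    have h0 := even_no_bridge F hF.2 fadj12
    refine (reach_transfer (P := (· ∈ C1)) ?_ m1 h0).2
    intro x y hx h
    rw [deleteEdges_adj, Set.mem_singleton_iff] at h
    obtain ⟨hxy, hns⟩ := h
    refine ⟨hcl1 x y hx hxy, Adj.reachable ?_⟩
    rw [hAdj]
    left
    refine ⟨hxy, hns, ?_⟩
    intro hc
    rcases Sym2.eq_iff.1 hc with ⟨rfl, rfl⟩ | ⟨rfl, rfl⟩
    · exact hdisj _ hx m3
    · exact hdisj _ hx m4
  have r34 : F'.Reachable v3 v4 := by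
    have h0 := even_no_bridge F hF.2 fadj34
    refine (reach_transfer (P := (· ∈ C2)) ?_ m3 h0).2
    intro x y hx h
    rw [deleteEdges_adj, Set.mem_singleton_iff] at h
    obtain ⟨hxy, hns⟩ := h
    refine ⟨hcl2 x y hx hxy, Adj.reachable ?_⟩
    rw [hAdj]
    left
    refine ⟨hxy, ?_, hns⟩
    intro hc
    rcases Sym2.eq_iff.1 hc with ⟨rfl, rfl⟩ | ⟨rfl, rfl⟩
    · exact hdisj _ m1 hx
    · exact hdisj _ m2 hx
  have adj14 : F'.Adj v1 v4 := by rw [hAdj]; right; left; rfl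
  -- inside C1 / C2 transfers
  have step1 : ∀ x y, x ∈ C1 → F.Adj x y → y ∈ C1 ∧ F'.Reachable x y := by
    intro x y hx h
    refine ⟨hcl1 x y hx h, ?_⟩
    by_cases h12 : s(x, y) = s(v1, v2)
    · rcases Sym2.eq_iff.1 h12 with ⟨rfl, rfl⟩ | ⟨rfl, rfl⟩
      · exact r12
      · exact r12.symm
    · refine Adj.reachable ?_
      rw [hAdj]
      left
      refine ⟨h, h12, ?_⟩
      intro hc
      rcases Sym2.eq_iff.1 hc with ⟨rfl, rfl⟩ | ⟨rfl, rfl⟩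
      · exact absurd m3 (fun hm => hdisj _ hx hm)
      · exact absurd m4 (fun hm => hdisj _ hx hm)
  have step2 : ∀ x y, x ∈ C2 → F.Adj x y → y ∈ C2 ∧ F'.Reachable x y := by
    intro x y hx h
    refine ⟨hcl2 x y hx h, ?_⟩
    by_cases h34 : s(x, y) = s(v3, v4)
    · rcases Sym2.eq_iff.1 h34 with ⟨rfl, rfl⟩ | ⟨rfl, rfl⟩
      · exact r34
      · exact r34.symm
    · refine Adj.reachable ?_
      rw [hAdj]
      left
      refine ⟨h, ?_, h34⟩
      intro hc
      rcases Sym2.eq_iff.1 hc with ⟨rfl, rfl⟩ | ⟨rfl, rfl⟩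
      · exact absurd m1 (fun hm => hdisj _ hm hx)
      · exact absurd m2 (fun hm => hdisj _ hm hx)
  have rC1 : ∀ u ∈ C1, F'.Reachable v1 u := by
    intro u hu
    have hr : F.Reachable v1 u := by
      have := hclass1 v1 m1
      rw [this] at hu
      exact hu
    exact (reach_transfer step1 m1 hr).2
  have rC2 : ∀ u ∈ C2, F'.Reachable v4 u := by
    intro u hu
    have hr : F.Reachable v4 u := by
      have := hclass2 v4 m4
      rw [this] at hu
      exact hu
    exact (reach_transfer step2 m4 hr).2
  have rmerge : ∀ u ∈ C1 ∪ C2, F'.Reachable v1 u := by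
    intro u hu
    rcases hu with hu | hu
    · exact rC1 u hu
    · exact (adj14.reachable).trans (rC2 u hu)
  -- the merged class
  have stepRev : ∀ x y, x ∈ C1 ∪ C2 → F'.Adj x y → (y ∈ C1 ∪ C2) ∧ F'.Reachable x y := by
    intro x y hx h
    refine ⟨?_, h.reachable⟩
    rw [hAdj] at h
    rcases h with ⟨h, -, -⟩ | h | h
    · rcases hx with hx | hx
      · exact Or.inl (hcl1 x y hx h)
      · exact Or.inr (hcl2 x y hx h)
    · rcases Sym2.eq_iff.1 h with ⟨rfl, rfl⟩ | ⟨rfl, rfl⟩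
      · exact Or.inr m4
      · exact Or.inl m1
    · rcases Sym2.eq_iff.1 h with ⟨rfl, rfl⟩ | ⟨rfl, rfl⟩
      · exact Or.inr m3
      · exact Or.inl m2
  have hmergedEq : {u | F'.Reachable v1 u} = C1 ∪ C2 := by
    ext u
    constructor
    · intro hu
      exact (reach_transfer stepRev (Or.inl m1) hu).1
    · intro hu
      exact rmerge u hu
  have degF'v1 : deg F' v1 ≠ 0 := by rw [degF'eq, degv1]; omega
  have hmergedCirc : IsCircuitOf F' (C1 ∪ C2) := ⟨v1, degF'v1, hmergedEq.symm⟩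
  -- other components
  have hOtherClass : ∀ w, w ∉ C1 → w ∉ C2 →
      {u | F'.Reachable w u} = {u | F.Reachable w u} := by
    intro w h1 h2
    have stepF : ∀ x y, (x ∉ C1 ∧ x ∉ C2) → F.Adj x y →
        (y ∉ C1 ∧ y ∉ C2) ∧ F'.Reachable x y := by
      intro x y hx h
      refine ⟨⟨fun hy => hx.1 (hcl1 y x hy h.symm), fun hy => hx.2 (hcl2 y x hy h.symm)⟩,
        Adj.reachable ?_⟩
      rw [hAdj]
      left
      refine ⟨h, ?_, ?_⟩ <;> intro hc <;> rcases Sym2.eq_iff.1 hc with ⟨rfl, rfl⟩ | ⟨rfl, rfl⟩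
      · exact hx.1 m1
      · exact hx.1 m2
      · exact hx.2 m3
      · exact hx.2 m4
    have stepF' : ∀ x y, (x ∉ C1 ∧ x ∉ C2) → F'.Adj x y →
        (y ∉ C1 ∧ y ∉ C2) ∧ F.Reachable x y := by
      intro x y hx h
      rw [hAdj] at h
      rcases h with ⟨h, -, -⟩ | h | h
      · exact ⟨⟨fun hy => hx.1 (hcl1 y x hy h.symm), fun hy => hx.2 (hcl2 y x hy h.symm)⟩,
          h.reachable⟩
      · rcases Sym2.eq_iff.1 h with ⟨rfl, -⟩ | ⟨rfl, -⟩
        · exact absurd m1 hx.1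
        · exact absurd m4 hx.2
      · rcases Sym2.eq_iff.1 h with ⟨rfl, -⟩ | ⟨rfl, -⟩
        · exact absurd m2 hx.1
        · exact absurd m3 hx.2
    ext u
    exact ⟨fun hu => (reach_transfer stepF' ⟨h1, h2⟩ hu).2,
      fun hu => (reach_transfer stepF ⟨h1, h2⟩ hu).2⟩
  have hOthers : ∀ C : Set V, IsCircuitOf F C → C ≠ C1 → C ≠ C2 → IsCircuitOf F' C := by
    rintro C ⟨w, hw, rfl⟩ hne1 hne2
    have hwm : w ∈ {u | F.Reachable w u} := Reachable.refl w
    have hw1 : w ∉ C1 := fun h => hne1 (hclass1 w h).symm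
    have hw2 : w ∉ C2 := fun h => hne2 (hclass2 w h).symm
    exact ⟨w, by rw [degF'eq]; exact hw, (hOtherClass w hw1 hw2).symm⟩
  -- circuit sets
  set O : Set (Set V) := {C | IsCircuitOf F C ∧ C ≠ C1 ∧ C ≠ C2} with hO
  have hcircF : {C : Set V | IsCircuitOf F C} = insert C1 (insert C2 O) := by
    ext C
    simp only [Set.mem_setOf_eq, Set.mem_insert_iff, hO]
    constructor
    · intro h
      by_cases h1 : C = C1
      · exact Or.inl h1
      by_cases h2 : C = C2
      · exact Or.inr (Or.inl h2)
      · exact Or.inr (Or.inr ⟨h, h1, h2⟩)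
    · rintro (rfl | rfl | h)
      · exact hC1
      · exact hC2
      · exact h.1
  have hcircF' : {C : Set V | IsCircuitOf F' C} = insert (C1 ∪ C2) O := by
    ext C
    simp only [Set.mem_setOf_eq, Set.mem_insert_iff, hO]
    constructor
    · rintro ⟨w, hw, rfl⟩
      by_cases hw12 : w ∈ C1 ∪ C2
      · left
        have hr : F'.Reachable v1 w := rmerge w hw12
        rw [← class_eq_of_reachable hr]
        exact hmergedEq
      · right
        rw [Set.mem_union] at hw12
        push_neg at hw12
        obtain ⟨hw1, hw2⟩ := hw12
        have hEq := hOtherClass w hw1 hw2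
        have hdegw : deg F w ≠ 0 := by rw [← degF'eq]; exact hw
        have hwm : w ∈ {u | F'.Reachable w u} := Reachable.refl w
        refine ⟨⟨w, hdegw, hEq⟩, ?_, ?_⟩
        · intro hc
          exact hw1 (hc ▸ hwm)
        · intro hc
          exact hw2 (hc ▸ hwm)
    · rintro (rfl | h)
      · exact hmergedCirc
      · exact hOthers _ h.1 h.2.1 h.2.2
  have hnm1 : C1 ∉ insert C2 O := by
    rintro (h | h)
    · exact hne h
    · exact h.2.1 rfl
  have hnm2 : C2 ∉ O := fun h => h.2.2 rfl
  have hnmU : (C1 ∪ C2) ∉ O := by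
    rintro ⟨⟨w, hw, hEq⟩, -, -⟩
    have hwm : w ∈ C1 ∪ C2 := by
      rw [hEq]
      exact Reachable.refl w
    rcases hwm with hwm | hwm
    · have : C1 = C1 ∪ C2 := (hclass1 w hwm).trans hEq.symm
      exact hdisj v3 (this ▸ (Or.inr m3 : v3 ∈ C1 ∪ C2)) m3
    · have : C2 = C1 ∪ C2 := (hclass2 w hwm).trans hEq.symm
      exact hdisj v1 m1 (this ▸ (Or.inl m1 : v1 ∈ C1 ∪ C2))
  have hnum : numCirc F = O.ncard + 2 := by
    have h0 : numCirc F = Set.ncard {C : Set V | IsCircuitOf F C} := rfl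
    rw [h0, hcircF, Set.ncard_insert_of_notMem hnm1 (Set.toFinite _),
      Set.ncard_insert_of_notMem hnm2 (Set.toFinite _)]
  have hnum' : numCirc F' = O.ncard + 1 := by
    have h0 : numCirc F' = Set.ncard {C : Set V | IsCircuitOf F' C} := rfl
    rw [h0, hcircF', Set.ncard_insert_of_notMem hnmU (Set.toFinite _)]
  have hiso : numIso F' = numIso F :=
    Nat.card_congr (Equiv.subtypeEquivRight fun v => by rw [degF'eq])
  refine ⟨hEF, ⟨C1 ∪ C2, hmergedCirc, Set.subset_union_left, Set.subset_union_right⟩,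
    hOthers, fun v => by rw [degF'eq], ?_⟩
  rw [cost, cost, hnum, hnum', hiso]
  push_cast
  ring
end

section
/- Let G be a bridgeless cubic graph with even factor F, and let C5 = v1v2v3v4v5 be a chordless 5-circuit such that v1v2 ∈ C1, v3v4 ∈ C2 for distinct circuits C1, C2 of F and v5 is an isolated vertex of F. Then F' = (F − {v1v2, v3v4}) ∪ {v2v3, v1v5, v5v4} is an even factor merging C1, C2 and v5 into one circuit, and c(F) − c(F') = 3. -/
open SimpleGraph

variable {V : Type*}

namespace FSAux

variable {V : Type*}

lemma deg_eq_ncard (F : SimpleGraph V) (v : V) : deg F v = (F.neighborSet v).ncard :=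
  Nat.card_coe_set_eq _

lemma deg_eq_zero_iff [Finite V] (F : SimpleGraph V) (v : V) :
    deg F v = 0 ↔ ∀ y, ¬ F.Adj v y := by
  rw [deg_eq_ncard, Set.ncard_eq_zero (Set.toFinite _)]
  constructor
  · intro h y hy
    have : y ∈ F.neighborSet v := hy
    simp [h] at this
  · intro h
    ext y
    simp only [SimpleGraph.mem_neighborSet, Set.mem_empty_iff_false, iff_false]
    exact h y

lemma deg_ne_zero_of_adj [Finite V] {F : SimpleGraph V} {a b : V} (h : F.Adj a b) :
    deg F a ≠ 0 := fun h0 => (deg_eq_zero_iff F a).mp h0 b h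

lemma no_adj_reachable_eq {F : SimpleGraph V} {u v : V} (h : ∀ y, ¬ F.Adj u y)
    (r : F.Reachable u v) : u = v := by
  obtain ⟨p⟩ := r
  cases p with
  | nil => rfl
  | cons h' _ => exact absurd h' (h _)

lemma walk_closed {H : SimpleGraph V} {S : Set V}
    (hS : ∀ x y, x ∈ S → H.Adj x y → y ∈ S) :
    ∀ {a b : V}, H.Walk a b → a ∈ S → b ∈ S
  | _, _, SimpleGraph.Walk.nil, ha => ha
  | _, _, SimpleGraph.Walk.cons h p, ha => walk_closed hS p (hS _ _ ha h)

lemma reach_closed {H : SimpleGraph V} {S : Set V}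
    (hS : ∀ x y, x ∈ S → H.Adj x y → y ∈ S) {a b : V} (ha : a ∈ S)
    (r : H.Reachable a b) : b ∈ S := by
  obtain ⟨p⟩ := r; exact walk_closed hS p ha

lemma walk_transfer {H K : SimpleGraph V} {S : Set V}
    (hS : ∀ x y, x ∈ S → H.Adj x y → y ∈ S)
    (h : ∀ x y, x ∈ S → H.Adj x y → K.Reachable x y) :
    ∀ {a b : V}, H.Walk a b → a ∈ S → K.Reachable a b
  | _, _, SimpleGraph.Walk.nil, _ => SimpleGraph.Reachable.refl _
  | _, _, SimpleGraph.Walk.cons had p, ha =>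
      (h _ _ ha had).trans (walk_transfer hS h p (hS _ _ ha had))

lemma reach_transfer {H K : SimpleGraph V} {S : Set V}
    (hS : ∀ x y, x ∈ S → H.Adj x y → y ∈ S)
    (h : ∀ x y, x ∈ S → H.Adj x y → K.Reachable x y) {a b : V} (ha : a ∈ S)
    (r : H.Reachable a b) : K.Reachable a b := by
  obtain ⟨p⟩ := r; exact walk_transfer hS h p ha

lemma reach_class_eq {F : SimpleGraph V} {v u : V} (h : F.Reachable v u) :
    {x | F.Reachable v x} = {x | F.Reachable u x} := by
  ext x
  exact ⟨fun hx => h.symm.trans hx, fun hx => h.trans hx⟩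

lemma deg_eq_degree [Fintype V] (F : SimpleGraph V) [DecidableRel F.Adj] (v : V) :
    deg F v = F.degree v := by
  rw [deg, Nat.card_eq_fintype_card, SimpleGraph.card_neighborSet_eq_degree]

lemma even_no_bridge [Fintype V] {F : SimpleGraph V}
    (h2 : ∀ v, deg F v = 0 ∨ deg F v = 2) {a b : V} (hab : F.Adj a b) :
    (F.deleteEdges {s(a, b)}).Reachable a b := by
  classical
  set H := F.deleteEdges {s(a, b)} with hH
  by_contra hr
  set S : Set V := {x | H.Reachable a x} with hSdef
  have hSc : ∀ x y, x ∈ S → H.Adj x y → y ∈ S := fun x y hx hxy => hx.trans hxy.reachable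
  have haS : a ∈ S := SimpleGraph.Reachable.refl a
  have hbS : b ∉ S := hr
  have hne : a ≠ b := hab.ne
  let K : SimpleGraph V :=
    { Adj := fun x y => H.Adj x y ∧ x ∈ S ∧ y ∈ S
      symm := ⟨fun x y ⟨h1, h2, h3⟩ => ⟨h1.symm, h3, h2⟩⟩
      loopless := ⟨fun x ⟨h1, _⟩ => H.loopless.irrefl x h1⟩ }
  haveI : DecidableRel K.Adj := fun _ _ => Classical.dec _
  have hHa : H.neighborSet a = F.neighborSet a \ {b} := by
    ext y
    simp only [SimpleGraph.mem_neighborSet, hH, SimpleGraph.deleteEdges_adj, Set.mem_diff,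
      Set.mem_singleton_iff, Sym2.eq_iff]
    constructor
    · rintro ⟨h1, h3⟩
      exact ⟨h1, fun hyb => h3 (by simp [hyb])⟩
    · rintro ⟨h1, h3⟩
      refine ⟨h1, ?_⟩
      rintro (⟨-, h5⟩ | ⟨h4, -⟩)
      · exact h3 h5
      · exact hne h4
  have hHgen : ∀ x, x ≠ a → x ≠ b → H.neighborSet x = F.neighborSet x := by
    intro x hxa hxb
    ext y
    simp only [SimpleGraph.mem_neighborSet, hH, SimpleGraph.deleteEdges_adj,
      Set.mem_singleton_iff, Sym2.eq_iff]
    constructor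
    · rintro ⟨h1, -⟩; exact h1
    · intro h1
      refine ⟨h1, ?_⟩
      rintro (⟨h4, -⟩ | ⟨h4, -⟩)
      · exact hxa h4
      · exact hxb h4
  have hdegFa : deg F a = 2 := by
    rcases h2 a with h | h
    · exact absurd h (deg_ne_zero_of_adj hab)
    · exact h
  have hmem : b ∈ F.neighborSet a := hab
  have h1' : (F.neighborSet a \ {b}).ncard = (F.neighborSet a).ncard - 1 :=
    Set.ncard_diff_singleton_of_mem hmem
  have hdegHa : deg H a = 1 := by
    rw [deg, Nat.card_coe_set_eq, hHa, h1']
    rw [deg, Nat.card_coe_set_eq] at hdegFa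
    omega
  have hKS : ∀ x, x ∈ S → K.neighborSet x = H.neighborSet x := by
    intro x hx
    ext y
    simp only [SimpleGraph.mem_neighborSet]
    exact ⟨fun ⟨h1, _⟩ => h1, fun h1 => ⟨h1, hx, hSc _ _ hx h1⟩⟩
  have hKout : ∀ x, x ∉ S → K.neighborSet x = ∅ := by
    intro x hx
    ext y
    simp only [SimpleGraph.mem_neighborSet, Set.mem_empty_iff_false, iff_false]
    rintro ⟨-, h3, -⟩
    exact hx h3
  have hodd : ∀ v, Odd (K.degree v) ↔ v = a := by
    intro v
    rw [← deg_eq_degree]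
    constructor
    · intro hv
      by_contra hva
      by_cases hvS : v ∈ S
      · have hvb : v ≠ b := fun h => hbS (h ▸ hvS)
        rw [deg, Nat.card_coe_set_eq, hKS v hvS, hHgen v hva hvb] at hv
        rcases h2 v with h | h <;>
          rw [deg, Nat.card_coe_set_eq] at h <;> rw [h] at hv <;> revert hv <;> decide
      · rw [deg, Nat.card_coe_set_eq, hKout v hvS] at hv
        simp at hv
    · rintro rfl
      rw [deg, Nat.card_coe_set_eq, hKS _ haS, ← Nat.card_coe_set_eq, ← deg, hdegHa]
      exact odd_one
  have heven := K.even_card_odd_degree_vertices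
  have hsingle : ({v | Odd (K.degree v)} : Finset V) = {a} := by
    ext v
    simp only [Finset.mem_filter, Finset.mem_univ, true_and, Finset.mem_singleton,
      Set.mem_setOf_eq]
    exact hodd v
  rw [hsingle] at heven
  simp at heven

lemma ncard_swap [Finite V] {S : Set V} {b c : V} (hb : b ∈ S) (hc : c ∉ S) :
    ((S \ {b}) ∪ {c}).ncard = S.ncard := by
  have hc' : c ∉ S \ {b} := fun h => hc h.1
  have hpos : 0 < S.ncard := (Set.ncard_pos (Set.toFinite _)).mpr ⟨b, hb⟩
  rw [Set.union_singleton, Set.ncard_insert_of_notMem hc' (Set.toFinite _),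
    Set.ncard_diff_singleton_of_mem hb]
  omega

lemma circuit_rebase [Finite V] {F : SimpleGraph V} {C : Set V} (h : IsCircuitOf F C)
    {u : V} (hu : u ∈ C) : deg F u ≠ 0 ∧ C = {x | F.Reachable u x} := by
  obtain ⟨v, hv, rfl⟩ := h
  have hru : F.Reachable v u := hu
  constructor
  · intro h0
    have heq : u = v := no_adj_reachable_eq ((deg_eq_zero_iff F u).mp h0) hru.symm
    exact hv (heq ▸ h0)
  · exact reach_class_eq hru

lemma card_subtype_eq (p : V → Prop) : Nat.card {v // p v} = ({v | p v} : Set V).ncard := by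
  rw [← Nat.card_coe_set_eq]
  exact Nat.card_congr (Equiv.subtypeEquivRight fun _ => Iff.rfl)

end FSAux

/-- The 5-swap of type 2: on a chordless 5-circuit `v1v2v3v4v5` with `v1v2 ∈ C1`,
`v3v4 ∈ C2` for distinct circuits `C1, C2` of `F` and `v5` an isolated vertex of `F`,
replacing `v1v2, v3v4` by `v2v3, v1v5, v5v4` merges `C1`, `C2` and `v5` into one
circuit and decreases the cost by exactly 3. -/
theorem five_swap_type2 {V : Type*} [Fintype V] (G F : SimpleGraph V)
    (hcubic : IsCubic G) (hbridgeless : Bridgeless G) (hF : IsEvenFactor G F)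
    (v1 v2 v3 v4 v5 : V)
    (a12 : G.Adj v1 v2) (a23 : G.Adj v2 v3) (a34 : G.Adj v3 v4) (a45 : G.Adj v4 v5)
    (a51 : G.Adj v5 v1)
    (n13 : ¬ G.Adj v1 v3) (n14 : ¬ G.Adj v1 v4) (n24 : ¬ G.Adj v2 v4)
    (n25 : ¬ G.Adj v2 v5) (n35 : ¬ G.Adj v3 v5)
    (C1 C2 : Set V) (hC1 : IsCircuitOf F C1) (hC2 : IsCircuitOf F C2) (hne : C1 ≠ C2)
    (e12 : s(v1, v2) ∈ F.edgeSet) (m1 : v1 ∈ C1) (m2 : v2 ∈ C1)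
    (e34 : s(v3, v4) ∈ F.edgeSet) (m3 : v3 ∈ C2) (m4 : v4 ∈ C2)
    (hiso : deg F v5 = 0) :
    let F' := SimpleGraph.fromEdgeSet
      ((F.edgeSet \ {s(v1, v2), s(v3, v4)}) ∪ {s(v2, v3), s(v1, v5), s(v5, v4)})
    IsEvenFactor G F' ∧
    (∃ C : Set V, IsCircuitOf F' C ∧ C1 ⊆ C ∧ C2 ⊆ C ∧ v5 ∈ C) ∧
    cost F - cost F' = 3 := by
  classical
  intro F'
  obtain ⟨hFG, hFdeg⟩ := hF
  have f12 : F.Adj v1 v2 := e12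
  have f34 : F.Adj v3 v4 := e34
  -- distinctness of the five vertices
  have ne12 : v1 ≠ v2 := a12.ne
  have ne23 : v2 ≠ v3 := a23.ne
  have ne34 : v3 ≠ v4 := a34.ne
  have ne45 : v4 ≠ v5 := a45.ne
  have ne15 : v1 ≠ v5 := fun h => a51.ne h.symm
  have ne13 : v1 ≠ v3 := fun h => n14 (by rw [h]; exact a34)
  have ne14 : v1 ≠ v4 := fun h => n13 (by rw [h]; exact a34.symm)
  have ne24 : v2 ≠ v4 := fun h => n25 (by rw [h]; exact a45)
  have ne25 : v2 ≠ v5 := fun h => n24 (by rw [h]; exact a45.symm)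
  have ne35 : v3 ≠ v5 := fun h => n13 (by rw [h]; exact a51.symm)
  -- isolation of v5
  have hno5 : ∀ y, ¬ F.Adj v5 y := (FSAux.deg_eq_zero_iff F v5).mp hiso
  -- component facts
  have hC1v1 : C1 = {x | F.Reachable v1 x} := (FSAux.circuit_rebase hC1 m1).2
  have hC1v2 : C1 = {x | F.Reachable v2 x} := (FSAux.circuit_rebase hC1 m2).2
  have hC2v3 : C2 = {x | F.Reachable v3 x} := (FSAux.circuit_rebase hC2 m3).2
  have hC2v4 : C2 = {x | F.Reachable v4 x} := (FSAux.circuit_rebase hC2 m4).2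
  have hC1closed : ∀ x y, x ∈ C1 → F.Adj x y → y ∈ C1 := by
    intro x y hx hxy
    rw [hC1v1] at hx ⊢
    exact hx.trans hxy.reachable
  have hC2closed : ∀ x y, x ∈ C2 → F.Adj x y → y ∈ C2 := by
    intro x y hx hxy
    rw [hC2v3] at hx ⊢
    exact hx.trans hxy.reachable
  have hdisj : ∀ x, x ∈ C1 → x ∉ C2 := fun x h1 h2 =>
    hne (((FSAux.circuit_rebase hC1 h1).2).trans ((FSAux.circuit_rebase hC2 h2).2).symm)
  have h5C1 : v5 ∉ C1 := fun h => (FSAux.circuit_rebase hC1 h).1 hiso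
  have h5C2 : v5 ∉ C2 := fun h => (FSAux.circuit_rebase hC2 h).1 hiso
  -- the adjacency of F'
  have hadj : ∀ a b, F'.Adj a b ↔
      ((F.Adj a b ∧ s(a, b) ≠ s(v1, v2) ∧ s(a, b) ≠ s(v3, v4)) ∨
        s(a, b) = s(v2, v3) ∨ s(a, b) = s(v1, v5) ∨ s(a, b) = s(v5, v4)) := by
    intro a b
    rw [show F' = SimpleGraph.fromEdgeSet
      ((F.edgeSet \ {s(v1, v2), s(v3, v4)}) ∪ {s(v2, v3), s(v1, v5), s(v5, v4)}) from rfl,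
      SimpleGraph.fromEdgeSet_adj]
    simp only [Set.mem_union, Set.mem_diff, Set.mem_insert_iff, Set.mem_singleton_iff,
      SimpleGraph.mem_edgeSet]
    constructor
    · rintro ⟨h | h, -⟩
      · exact Or.inl ⟨h.1, fun he => h.2 (Or.inl he), fun he => h.2 (Or.inr he)⟩
      · exact Or.inr h
    · rintro (⟨h1, h2, h3⟩ | h | h | h)
      · exact ⟨Or.inl ⟨h1, fun he => he.elim h2 h3⟩, h1.ne⟩
      · refine ⟨Or.inr (Or.inl h), ?_⟩
        rcases Sym2.eq_iff.mp h with ⟨rfl, rfl⟩ | ⟨rfl, rfl⟩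
        exacts [ne23, ne23.symm]
      · refine ⟨Or.inr (Or.inr (Or.inl h)), ?_⟩
        rcases Sym2.eq_iff.mp h with ⟨rfl, rfl⟩ | ⟨rfl, rfl⟩
        exacts [ne15, ne15.symm]
      · refine ⟨Or.inr (Or.inr (Or.inr h)), ?_⟩
        rcases Sym2.eq_iff.mp h with ⟨rfl, rfl⟩ | ⟨rfl, rfl⟩
        exacts [ne45.symm, ne45]
  -- neighbor sets of F'
  have hN1 : F'.neighborSet v1 = (F.neighborSet v1 \ {v2}) ∪ {v5} := by
    ext y
    simp only [SimpleGraph.mem_neighborSet, Set.mem_union, Set.mem_diff, Set.mem_singleton_iff]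
    rw [hadj]
    constructor
    · rintro (⟨hf, h1, -⟩ | h | h | h)
      · exact Or.inl ⟨hf, fun hy => h1 (by rw [hy])⟩
      · rcases Sym2.eq_iff.mp h with ⟨h', -⟩ | ⟨h', -⟩
        exacts [absurd h' ne12, absurd h' ne13]
      · rcases Sym2.eq_iff.mp h with ⟨-, h'⟩ | ⟨h', -⟩
        exacts [Or.inr h', absurd h' ne15]
      · rcases Sym2.eq_iff.mp h with ⟨h', -⟩ | ⟨h', -⟩
        exacts [absurd h' ne15, absurd h' ne14]
    · rintro (⟨hf, hy2⟩ | hy5)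
      · refine Or.inl ⟨hf, ?_, ?_⟩
        · intro h
          rcases Sym2.eq_iff.mp h with ⟨-, h'⟩ | ⟨h', -⟩
          exacts [hy2 h', ne12 h']
        · intro h
          rcases Sym2.eq_iff.mp h with ⟨h', -⟩ | ⟨h', -⟩
          exacts [ne13 h', ne14 h']
      · subst hy5
        exact Or.inr (Or.inr (Or.inl rfl))
  have hN2 : F'.neighborSet v2 = (F.neighborSet v2 \ {v1}) ∪ {v3} := by
    ext y
    simp only [SimpleGraph.mem_neighborSet, Set.mem_union, Set.mem_diff, Set.mem_singleton_iff]
    rw [hadj]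
    constructor
    · rintro (⟨hf, h1, -⟩ | h | h | h)
      · exact Or.inl ⟨hf, fun hy => h1 (by rw [hy]; exact Sym2.eq_swap)⟩
      · rcases Sym2.eq_iff.mp h with ⟨-, h'⟩ | ⟨h', -⟩
        exacts [Or.inr h', absurd h' ne23]
      · rcases Sym2.eq_iff.mp h with ⟨h', -⟩ | ⟨h', -⟩
        exacts [absurd h' ne12.symm, absurd h' ne25]
      · rcases Sym2.eq_iff.mp h with ⟨h', -⟩ | ⟨h', -⟩
        exacts [absurd h' ne25, absurd h' ne24]
    · rintro (⟨hf, hy1⟩ | hy3)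
      · refine Or.inl ⟨hf, ?_, ?_⟩
        · intro h
          rcases Sym2.eq_iff.mp h with ⟨h', -⟩ | ⟨-, h'⟩
          exacts [ne12 h'.symm, hy1 h']
        · intro h
          rcases Sym2.eq_iff.mp h with ⟨h', -⟩ | ⟨h', -⟩
          exacts [ne23 h', ne24 h']
      · subst hy3
        exact Or.inr (Or.inl rfl)
  have hN3 : F'.neighborSet v3 = (F.neighborSet v3 \ {v4}) ∪ {v2} := by
    ext y
    simp only [SimpleGraph.mem_neighborSet, Set.mem_union, Set.mem_diff, Set.mem_singleton_iff]
    rw [hadj]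
    constructor
    · rintro (⟨hf, -, h2⟩ | h | h | h)
      · exact Or.inl ⟨hf, fun hy => h2 (by rw [hy])⟩
      · rcases Sym2.eq_iff.mp h with ⟨h', -⟩ | ⟨-, h'⟩
        exacts [absurd h' ne23.symm, Or.inr h']
      · rcases Sym2.eq_iff.mp h with ⟨h', -⟩ | ⟨h', -⟩
        exacts [absurd h' ne13.symm, absurd h' ne35]
      · rcases Sym2.eq_iff.mp h with ⟨h', -⟩ | ⟨h', -⟩
        exacts [absurd h' ne35, absurd h' ne34]
    · rintro (⟨hf, hy4⟩ | hy2)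
      · refine Or.inl ⟨hf, ?_, ?_⟩
        · intro h
          rcases Sym2.eq_iff.mp h with ⟨h', -⟩ | ⟨h', -⟩
          exacts [ne13 h'.symm, ne23 h'.symm]
        · intro h
          rcases Sym2.eq_iff.mp h with ⟨-, h'⟩ | ⟨h', -⟩
          exacts [hy4 h', ne34 h']
      · subst hy2
        exact Or.inr (Or.inl Sym2.eq_swap)
  have hN4 : F'.neighborSet v4 = (F.neighborSet v4 \ {v3}) ∪ {v5} := by
    ext y
    simp only [SimpleGraph.mem_neighborSet, Set.mem_union, Set.mem_diff, Set.mem_singleton_iff]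
    rw [hadj]
    constructor
    · rintro (⟨hf, -, h2⟩ | h | h | h)
      · exact Or.inl ⟨hf, fun hy => h2 (by rw [hy]; exact Sym2.eq_swap)⟩
      · rcases Sym2.eq_iff.mp h with ⟨h', -⟩ | ⟨h', -⟩
        exacts [absurd h' ne24.symm, absurd h' ne34.symm]
      · rcases Sym2.eq_iff.mp h with ⟨h', -⟩ | ⟨h', -⟩
        exacts [absurd h' ne14.symm, absurd h' ne45]
      · rcases Sym2.eq_iff.mp h with ⟨h', -⟩ | ⟨-, h'⟩
        exacts [absurd h' ne45, Or.inr h']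
    · rintro (⟨hf, hy3⟩ | hy5)
      · refine Or.inl ⟨hf, ?_, ?_⟩
        · intro h
          rcases Sym2.eq_iff.mp h with ⟨h', -⟩ | ⟨h', -⟩
          exacts [ne14 h'.symm, ne24 h'.symm]
        · intro h
          rcases Sym2.eq_iff.mp h with ⟨h', -⟩ | ⟨-, h'⟩
          exacts [ne34 h'.symm, hy3 h']
      · subst hy5
        exact Or.inr (Or.inr (Or.inr Sym2.eq_swap))
  have hN5 : F'.neighborSet v5 = {v1, v4} := by
    ext y
    simp only [SimpleGraph.mem_neighborSet, Set.mem_insert_iff, Set.mem_singleton_iff]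
    rw [hadj]
    constructor
    · rintro (⟨hf, -, -⟩ | h | h | h)
      · exact absurd hf (hno5 y)
      · rcases Sym2.eq_iff.mp h with ⟨h', -⟩ | ⟨h', -⟩
        exacts [absurd h' ne25.symm, absurd h' ne35.symm]
      · rcases Sym2.eq_iff.mp h with ⟨h', -⟩ | ⟨-, h'⟩
        exacts [absurd h' ne15.symm, Or.inl h']
      · rcases Sym2.eq_iff.mp h with ⟨-, h'⟩ | ⟨h', -⟩
        exacts [Or.inr h', absurd h' ne45.symm]
    · rintro (hy1 | hy4)
      · subst hy1
        exact Or.inr (Or.inr (Or.inl Sym2.eq_swap))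
      · subst hy4
        exact Or.inr (Or.inr (Or.inr rfl))
  have hNgen : ∀ x, x ≠ v1 → x ≠ v2 → x ≠ v3 → x ≠ v4 → x ≠ v5 →
      F'.neighborSet x = F.neighborSet x := by
    intro x h1 h2 h3 h4 h5
    ext y
    simp only [SimpleGraph.mem_neighborSet]
    rw [hadj]
    constructor
    · rintro (⟨hf, -, -⟩ | h | h | h)
      · exact hf
      · rcases Sym2.eq_iff.mp h with ⟨h', -⟩ | ⟨h', -⟩
        exacts [absurd h' h2, absurd h' h3]
      · rcases Sym2.eq_iff.mp h with ⟨h', -⟩ | ⟨h', -⟩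
        exacts [absurd h' h1, absurd h' h5]
      · rcases Sym2.eq_iff.mp h with ⟨h', -⟩ | ⟨h', -⟩
        exacts [absurd h' h5, absurd h' h4]
    · intro hf
      refine Or.inl ⟨hf, ?_, ?_⟩
      · intro h
        rcases Sym2.eq_iff.mp h with ⟨h', -⟩ | ⟨h', -⟩
        exacts [h1 h', h2 h']
      · intro h
        rcases Sym2.eq_iff.mp h with ⟨h', -⟩ | ⟨h', -⟩
        exacts [h3 h', h4 h']
  have hdeg_ne : ∀ x, x ≠ v1 → x ≠ v2 → x ≠ v3 → x ≠ v4 → x ≠ v5 → deg F' x = deg F x := by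
    intro x h1 h2 h3 h4 h5
    rw [FSAux.deg_eq_ncard, FSAux.deg_eq_ncard, hNgen x h1 h2 h3 h4 h5]
  -- degrees of F
  have hd1 : deg F v1 = 2 := (hFdeg v1).resolve_left (FSAux.deg_ne_zero_of_adj f12)
  have hd2 : deg F v2 = 2 := (hFdeg v2).resolve_left (FSAux.deg_ne_zero_of_adj f12.symm)
  have hd3 : deg F v3 = 2 := (hFdeg v3).resolve_left (FSAux.deg_ne_zero_of_adj f34)
  have hd4 : deg F v4 = 2 := (hFdeg v4).resolve_left (FSAux.deg_ne_zero_of_adj f34.symm)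
  -- degrees of F'
  have hd1' : deg F' v1 = 2 := by
    have hc : v5 ∉ F.neighborSet v1 := fun h => hno5 v1 (SimpleGraph.Adj.symm h)
    rw [FSAux.deg_eq_ncard, hN1,
      FSAux.ncard_swap (show v2 ∈ F.neighborSet v1 from f12) hc, ← FSAux.deg_eq_ncard, hd1]
  have hd2' : deg F' v2 = 2 := by
    have hc : v3 ∉ F.neighborSet v2 := fun h => hdisj v3 (hC1closed v2 v3 m2 h) m3
    rw [FSAux.deg_eq_ncard, hN2,
      FSAux.ncard_swap (show v1 ∈ F.neighborSet v2 from f12.symm) hc, ← FSAux.deg_eq_ncard, hd2]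
  have hd3' : deg F' v3 = 2 := by
    have hc : v2 ∉ F.neighborSet v3 := fun h => hdisj v2 m2 (hC2closed v3 v2 m3 h)
    rw [FSAux.deg_eq_ncard, hN3,
      FSAux.ncard_swap (show v4 ∈ F.neighborSet v3 from f34) hc, ← FSAux.deg_eq_ncard, hd3]
  have hd4' : deg F' v4 = 2 := by
    have hc : v5 ∉ F.neighborSet v4 := fun h => hno5 v4 (SimpleGraph.Adj.symm h)
    rw [FSAux.deg_eq_ncard, hN4,
      FSAux.ncard_swap (show v3 ∈ F.neighborSet v4 from f34.symm) hc, ← FSAux.deg_eq_ncard, hd4]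
  have hd5' : deg F' v5 = 2 := by
    rw [FSAux.deg_eq_ncard, hN5, Set.ncard_pair ne14]
  -- F' is an even factor
  have hle : F' ≤ G := by
    intro a b hab
    rcases (hadj a b).mp hab with ⟨h, -, -⟩ | h | h | h
    · exact hFG h
    · rcases Sym2.eq_iff.mp h with ⟨rfl, rfl⟩ | ⟨rfl, rfl⟩
      exacts [a23, a23.symm]
    · rcases Sym2.eq_iff.mp h with ⟨rfl, rfl⟩ | ⟨rfl, rfl⟩
      exacts [a51.symm, a51]
    · rcases Sym2.eq_iff.mp h with ⟨rfl, rfl⟩ | ⟨rfl, rfl⟩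
      exacts [a45.symm, a45]
  have hdeg' : ∀ v, deg F' v = 0 ∨ deg F' v = 2 := by
    intro v
    by_cases h1 : v = v1
    · subst h1; exact Or.inr hd1'
    by_cases h2 : v = v2
    · subst h2; exact Or.inr hd2'
    by_cases h3 : v = v3
    · subst h3; exact Or.inr hd3'
    by_cases h4 : v = v4
    · subst h4; exact Or.inr hd4'
    by_cases h5 : v = v5
    · subst h5; exact Or.inr hd5'
    rw [hdeg_ne v h1 h2 h3 h4 h5]
    exact hFdeg v
  -- new edges of F'
  have f'23 : F'.Adj v2 v3 := (hadj _ _).mpr (Or.inr (Or.inl rfl))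
  have f'15 : F'.Adj v1 v5 := (hadj _ _).mpr (Or.inr (Or.inr (Or.inl rfl)))
  have f'54 : F'.Adj v5 v4 := (hadj _ _).mpr (Or.inr (Or.inr (Or.inr rfl)))
  -- bridge-based reachability within C1 and C2
  have hbr12 : (F.deleteEdges {s(v1, v2)}).Reachable v1 v2 := FSAux.even_no_bridge hFdeg f12
  have hbr34 : (F.deleteEdges {s(v3, v4)}).Reachable v3 v4 := FSAux.even_no_bridge hFdeg f34
  have r12' : F'.Reachable v1 v2 := by
    refine FSAux.reach_transfer (S := C1)
      (fun x y hx hxy => hC1closed x y hx (SimpleGraph.deleteEdges_adj.mp hxy).1) ?_ m1 hbr12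
    intro x y hx hxy
    obtain ⟨hFxy, hne'⟩ := SimpleGraph.deleteEdges_adj.mp hxy
    refine SimpleGraph.Adj.reachable ((hadj x y).mpr (Or.inl ⟨hFxy, ?_, ?_⟩))
    · exact fun h => hne' (Set.mem_singleton_iff.mpr h)
    · intro h
      rcases Sym2.eq_iff.mp h with ⟨rfl, -⟩ | ⟨rfl, -⟩
      exacts [hdisj x hx m3, hdisj x hx m4]
  have r34' : F'.Reachable v3 v4 := by
    refine FSAux.reach_transfer (S := C2)
      (fun x y hx hxy => hC2closed x y hx (SimpleGraph.deleteEdges_adj.mp hxy).1) ?_ m3 hbr34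
    intro x y hx hxy
    obtain ⟨hFxy, hne'⟩ := SimpleGraph.deleteEdges_adj.mp hxy
    refine SimpleGraph.Adj.reachable ((hadj x y).mpr (Or.inl ⟨hFxy, ?_, ?_⟩))
    · intro h
      rcases Sym2.eq_iff.mp h with ⟨rfl, -⟩ | ⟨rfl, -⟩
      exacts [hdisj _ m1 hx, hdisj _ m2 hx]
    · exact fun h => hne' (Set.mem_singleton_iff.mpr h)
  -- transfer of reachability within C1 and C2 to F'
  have htrans1 : ∀ u ∈ C1, F'.Reachable v2 u := by
    intro u hu
    have hru : F.Reachable v2 u := by rw [hC1v2] at hu; exact hu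
    refine FSAux.reach_transfer (S := C1) hC1closed ?_ m2 hru
    intro x y hx hxy
    by_cases h12 : s(x, y) = s(v1, v2)
    · rcases Sym2.eq_iff.mp h12 with ⟨rfl, rfl⟩ | ⟨rfl, rfl⟩
      exacts [r12', r12'.symm]
    · refine SimpleGraph.Adj.reachable ((hadj x y).mpr (Or.inl ⟨hxy, h12, ?_⟩))
      intro h
      rcases Sym2.eq_iff.mp h with ⟨rfl, -⟩ | ⟨rfl, -⟩
      exacts [hdisj x hx m3, hdisj x hx m4]
  have htrans2 : ∀ u ∈ C2, F'.Reachable v3 u := by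
    intro u hu
    have hru : F.Reachable v3 u := by rw [hC2v3] at hu; exact hu
    refine FSAux.reach_transfer (S := C2) hC2closed ?_ m3 hru
    intro x y hx hxy
    by_cases h34 : s(x, y) = s(v3, v4)
    · rcases Sym2.eq_iff.mp h34 with ⟨rfl, rfl⟩ | ⟨rfl, rfl⟩
      exacts [r34', r34'.symm]
    · refine SimpleGraph.Adj.reachable ((hadj x y).mpr (Or.inl ⟨hxy, ?_, h34⟩))
      intro h
      rcases Sym2.eq_iff.mp h with ⟨rfl, -⟩ | ⟨rfl, -⟩
      exacts [hdisj _ m1 hx, hdisj _ m2 hx]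
  have hsub1 : ∀ u ∈ C1, F'.Reachable v2 u := htrans1
  have hsub2 : ∀ u ∈ C2, F'.Reachable v2 u := fun u hu => f'23.reachable.trans (htrans2 u hu)
  have r25 : F'.Reachable v2 v5 := (htrans1 v1 m1).symm.symm.trans f'15.reachable
  -- the merged set
  set Cm : Set V := (C1 ∪ C2) ∪ {v5} with hCmdef
  have m1' : v1 ∈ Cm := Or.inl (Or.inl m1)
  have m2' : v2 ∈ Cm := Or.inl (Or.inl m2)
  have m3' : v3 ∈ Cm := Or.inl (Or.inr m3)
  have m4' : v4 ∈ Cm := Or.inl (Or.inr m4)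
  have m5' : v5 ∈ Cm := Or.inr rfl
  have hCmclosed : ∀ x y, x ∈ Cm → F'.Adj x y → y ∈ Cm := by
    intro x y hx hxy
    rcases (hadj x y).mp hxy with ⟨hf, -, -⟩ | h | h | h
    · rcases hx with (hx | hx) | hx
      · exact Or.inl (Or.inl (hC1closed _ _ hx hf))
      · exact Or.inl (Or.inr (hC2closed _ _ hx hf))
      · rw [Set.mem_singleton_iff] at hx
        subst hx
        exact absurd hf (hno5 y)
    · rcases Sym2.eq_iff.mp h with ⟨rfl, rfl⟩ | ⟨rfl, rfl⟩
      exacts [m3', m2']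
    · rcases Sym2.eq_iff.mp h with ⟨rfl, rfl⟩ | ⟨rfl, rfl⟩
      exacts [m5', m1']
    · rcases Sym2.eq_iff.mp h with ⟨rfl, rfl⟩ | ⟨rfl, rfl⟩
      exacts [m4', m5']
  have hCfull : {x | F'.Reachable v2 x} = Cm := by
    apply Set.Subset.antisymm
    · intro x hx
      exact FSAux.reach_closed hCmclosed m2' hx
    · rintro x ((hx | hx) | hx)
      · exact hsub1 x hx
      · exact hsub2 x hx
      · rw [Set.mem_singleton_iff] at hx
        subst hx
        exact r25
  have hCm_circ' : IsCircuitOf F' Cm := ⟨v2, by rw [hd2']; exact two_ne_zero, hCfull.symm⟩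
  -- vertices outside Cm
  have hout : ∀ x, x ∉ Cm → (x ≠ v1 ∧ x ≠ v2 ∧ x ≠ v3 ∧ x ≠ v4 ∧ x ≠ v5) := by
    intro x hx
    refine ⟨?_, ?_, ?_, ?_, ?_⟩ <;> rintro rfl
    exacts [hx m1', hx m2', hx m3', hx m4', hx m5']
  have hdegout : ∀ x, x ∉ Cm → deg F' x = deg F x := by
    intro x hx
    obtain ⟨h1, h2, h3, h4, h5⟩ := hout x hx
    exact hdeg_ne x h1 h2 h3 h4 h5
  have hadjout : ∀ x y, x ∉ Cm → (F'.Adj x y ↔ F.Adj x y) := by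
    intro x y hx
    obtain ⟨h1, h2, h3, h4, h5⟩ := hout x hx
    constructor
    · intro h
      have hy : y ∈ F'.neighborSet x := h
      rw [hNgen x h1 h2 h3 h4 h5] at hy
      exact hy
    · intro h
      have hy : y ∈ F.neighborSet x := h
      rw [← hNgen x h1 h2 h3 h4 h5] at hy
      exact hy
  have hFCm : ∀ x y, x ∉ Cm → F.Adj x y → y ∉ Cm := by
    intro x y hx hxy hy
    rcases hy with (hy | hy) | hy
    · exact hx (Or.inl (Or.inl (hC1closed y x hy hxy.symm)))
    · exact hx (Or.inl (Or.inr (hC2closed y x hy hxy.symm)))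
    · rw [Set.mem_singleton_iff] at hy
      subst hy
      exact hno5 x hxy.symm
  have hcore : ∀ v, v ∉ Cm → {x | F'.Reachable v x} = {x | F.Reachable v x} := by
    intro v hv
    apply Set.Subset.antisymm
    · intro x hx
      exact FSAux.reach_transfer (S := {z | z ∉ Cm})
        (fun a b ha hab => hFCm a b ha ((hadjout a b ha).mp hab))
        (fun a b ha hab => ((hadjout a b ha).mp hab).reachable) hv hx
    · intro x hx
      exact FSAux.reach_transfer (S := {z | z ∉ Cm})
        (fun a b ha hab => hFCm a b ha hab)
        (fun a b ha hab => ((hadjout a b ha).mpr hab).reachable) hv hx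
  -- numIso drops by one
  have hIso : {v | deg F' v = 0} = {v | deg F v = 0} \ {v5} := by
    ext x
    simp only [Set.mem_setOf_eq, Set.mem_diff, Set.mem_singleton_iff]
    constructor
    · intro hx
      by_cases h1 : x = v1
      · subst h1; rw [hd1'] at hx; omega
      by_cases h2 : x = v2
      · subst h2; rw [hd2'] at hx; omega
      by_cases h3 : x = v3
      · subst h3; rw [hd3'] at hx; omega
      by_cases h4 : x = v4
      · subst h4; rw [hd4'] at hx; omega
      by_cases h5 : x = v5
      · subst h5; rw [hd5'] at hx; omega
      rw [hdeg_ne x h1 h2 h3 h4 h5] at hx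
      exact ⟨hx, h5⟩
    · rintro ⟨hx, hx5⟩
      have h1 : x ≠ v1 := fun h => by subst h; rw [hd1] at hx; omega
      have h2 : x ≠ v2 := fun h => by subst h; rw [hd2] at hx; omega
      have h3 : x ≠ v3 := fun h => by subst h; rw [hd3] at hx; omega
      have h4 : x ≠ v4 := fun h => by subst h; rw [hd4] at hx; omega
      rw [hdeg_ne x h1 h2 h3 h4 hx5]
      exact hx
  have hIsoCard : numIso F = numIso F' + 1 := by
    have h5T : v5 ∈ {v | deg F v = 0} := hiso
    have hpos : 0 < ({v | deg F v = 0} : Set V).ncard :=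
      (Set.ncard_pos (Set.toFinite _)).mpr ⟨v5, h5T⟩
    have hdiff : ({v | deg F v = 0} \ {v5} : Set V).ncard =
        ({v | deg F v = 0} : Set V).ncard - 1 :=
      Set.ncard_diff_singleton_of_mem h5T
    rw [numIso, numIso, FSAux.card_subtype_eq, FSAux.card_subtype_eq, hIso, hdiff]
    omega
  -- numCirc drops by one
  have hsetseq : {D : Set V | IsCircuitOf F' D} =
      ({D : Set V | IsCircuitOf F D} \ {C1, C2}) ∪ {Cm} := by
    apply Set.Subset.antisymm
    · rintro D ⟨v, hv, rfl⟩
      by_cases hvCm : v ∈ Cm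
      · right
        have hr2v : F'.Reachable v2 v := by
          rcases hvCm with (h | h) | h
          · exact hsub1 v h
          · exact hsub2 v h
          · rw [Set.mem_singleton_iff] at h; subst h; exact r25
        show {x | F'.Reachable v x} = Cm
        rw [← FSAux.reach_class_eq hr2v]
        exact hCfull
      · left
        have hdv : deg F v ≠ 0 := by rwa [← hdegout v hvCm]
        have hclass := hcore v hvCm
        refine ⟨⟨v, hdv, hclass⟩, ?_⟩
        intro hD
        have hvD : v ∈ {x | F'.Reachable v x} := SimpleGraph.Reachable.refl v
        rcases hD with hD | hD
        · rw [hD] at hvD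
          exact hvCm (Or.inl (Or.inl hvD))
        · rw [Set.mem_singleton_iff] at hD
          rw [hD] at hvD
          exact hvCm (Or.inl (Or.inr hvD))
    · rintro D (⟨⟨v, hv, rfl⟩, hD12⟩ | hD)
      · have hvCm : v ∉ Cm := by
          intro hvCm
          rcases hvCm with (h | h) | h
          · exact hD12 (Or.inl ((FSAux.circuit_rebase hC1 h).2.symm))
          · exact hD12 (Or.inr (Set.mem_singleton_iff.mpr
              ((FSAux.circuit_rebase hC2 h).2.symm)))
          · rw [Set.mem_singleton_iff] at h
            subst h
            exact hv hiso
        exact ⟨v, by rwa [hdegout v hvCm], (hcore v hvCm).symm⟩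
      · rw [Set.mem_singleton_iff] at hD
        subst hD
        exact hCm_circ'
  have hCmnot : Cm ∉ {D : Set V | IsCircuitOf F D} :=
    fun h => (FSAux.circuit_rebase h m5').1 hiso
  have hCmnot' : Cm ∉ ({D : Set V | IsCircuitOf F D} \ {C1, C2}) := fun h => hCmnot h.1
  have hpairsub : ({C1, C2} : Set (Set V)) ⊆ {D : Set V | IsCircuitOf F D} := by
    rintro D (rfl | hD)
    · exact hC1
    · rw [Set.mem_singleton_iff] at hD
      subst hD
      exact hC2
  have hcard1 : ({D : Set V | IsCircuitOf F' D}).ncard =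
      ({D : Set V | IsCircuitOf F D} \ {C1, C2}).ncard + 1 := by
    rw [hsetseq, Set.union_singleton, Set.ncard_insert_of_notMem hCmnot' (Set.toFinite _)]
  have hcard2 : ({D : Set V | IsCircuitOf F D}).ncard =
      ({D : Set V | IsCircuitOf F D} \ {C1, C2}).ncard + 2 := by
    conv_lhs => rw [← Set.diff_union_of_subset hpairsub]
    rw [Set.ncard_union_eq Set.disjoint_sdiff_left (Set.toFinite _) (Set.toFinite _),
      Set.ncard_pair hne]
  have hCircCard : numCirc F = numCirc F' + 1 := by
    rw [numCirc, numCirc, FSAux.card_subtype_eq, FSAux.card_subtype_eq, hcard1, hcard2]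
  -- conclusion
  refine ⟨⟨hle, hdeg'⟩, ⟨Cm, hCm_circ', fun u hu => Or.inl (Or.inl hu),
    fun u hu => Or.inl (Or.inr hu), m5'⟩, ?_⟩
  rw [cost, cost, hIsoCard, hCircCard]
  push_cast
  ring
end
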